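/- arXiv:1301.7452 — 7 statements merged into one kernel-verified Lean document; each statement's English description precedes it below -/
import Mathlib

section
/- Let D be a Young diagram fitting below the diagonal of the P \times Q rectangle (P = Kp, Q = Kq, p,q coprime positive, K positive). For a box c \in D, let n_c be the northward boundary-path edge in the row of c and e_c the westward boundary-path edge in the column of c, and label each boundary vertex by (number of westward edges before it)·q minus (number of northward edges before it)·p, starting from the southeast corner of R_{P,Q} with label 0. If e_c enters vertex labeled v and n_c enters vertex labeled w, then v = w + (a(c)+1)·q - l(c)·p. In particular v = w iff p·l(c) = q·(a(c)+1), and v < w iff p·l(c) > q·(a(c)+1). -/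
/-! Because `D` is down-closed, the row through `c` has length `c.1 + 1 + a(c)` and the column
through `c` has length `c.2 + 1 + l(c)`; substituting these into the two labels gives the
identity, and the equivalences are rearrangements of it. Column lengths and legs are handled by
transposing the diagram, which turns them into row lengths and arms. -/

/-- A Young diagram: a finite down-closed subset of ℕ². -/
def IsYoung (D : Finset (ℕ × ℕ)) : Prop :=
  ∀ x y x' y', (x, y) ∈ D → x' ≤ x → y' ≤ y → (x', y') ∈ D

/-- Arm length of a box inside the diagram. -/
def arm (D : Finset (ℕ × ℕ)) (c : ℕ × ℕ) : ℕ :=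
  (D.filter fun d => d.2 = c.2 ∧ c.1 < d.1).card

/-- Leg length of a box inside the diagram. -/
def leg (D : Finset (ℕ × ℕ)) (c : ℕ × ℕ) : ℕ :=
  (D.filter fun d => d.1 = c.1 ∧ c.2 < d.2).card

/-- Arm length of a box in the complement of the diagram. -/
def coArm (D : Finset (ℕ × ℕ)) (c : ℕ × ℕ) : ℕ :=
  ((Finset.range c.1).filter fun x' => (x', c.2) ∉ D).card

/-- Leg length of a box in the complement of the diagram. -/
def coLeg (D : Finset (ℕ × ℕ)) (c : ℕ × ℕ) : ℕ :=
  ((Finset.range c.2).filter fun y' => (c.1, y') ∉ D).card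

/-- Length of column x of the diagram. -/
def colLen (D : Finset (ℕ × ℕ)) (x : ℕ) : ℕ := (D.filter fun c => c.1 = x).card

/-- Length of row y of the diagram. -/
def rowLen (D : Finset (ℕ × ℕ)) (y : ℕ) : ℕ := (D.filter fun c => c.2 = y).card

/-- Label of the endpoint of the westward boundary edge in column x.
The boundary path starts at the southeast corner (P,0) with label 0, each
westward step adds q and each northward step subtracts p; the westward edge in
column x ends at the point (x, colLen D x). -/
def wlabel (D : Finset (ℕ × ℕ)) (p q P : ℕ) (x : ℕ) : ℤ :=
  ((P : ℤ) - x) * q - (colLen D x : ℤ) * p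

/-- Label of the endpoint of the northward boundary edge in row y: it ends at
the point (rowLen D y, y+1). -/
def nlabel (D : Finset (ℕ × ℕ)) (p q P : ℕ) (y : ℕ) : ℤ :=
  ((P : ℤ) - rowLen D y) * q - ((y : ℤ) + 1) * p

/-- Number of westward boundary edges entering a vertex labeled v. -/
def Win (D : Finset (ℕ × ℕ)) (p q P : ℕ) (v : ℤ) : ℕ :=
  ((Finset.range P).filter fun x => wlabel D p q P x = v).card

/-- Number of northward boundary edges entering a vertex labeled v. -/
def Nin (D : Finset (ℕ × ℕ)) (p q P Q : ℕ) (v : ℤ) : ℕ :=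
  ((Finset.range Q).filter fun y => nlabel D p q P y = v).card

/-- The set of labels of vertices of the boundary graph M(D). -/
def labels (D : Finset (ℕ × ℕ)) (p q P Q : ℕ) : Finset ℤ :=
  ((Finset.range P).image (wlabel D p q P)) ∪ ((Finset.range Q).image (nlabel D p q P))

def transpose (D : Finset (ℕ × ℕ)) : Finset (ℕ × ℕ) :=
  D.map (Equiv.prodComm ℕ ℕ).toEmbedding

lemma isYoung_transpose {D : Finset (ℕ × ℕ)} (hD : IsYoung D) : IsYoung (transpose D) := by
  intro x y x' y' h hx hy
  simp only [transpose, Finset.mem_map_equiv] at h ⊢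
  exact hD y x y' x' h hy hx

lemma rowLen_transpose (D : Finset (ℕ × ℕ)) (x : ℕ) : rowLen (transpose D) x = colLen D x := by
  simp only [rowLen, colLen, transpose, Finset.filter_map, Finset.card_map]
  rfl

lemma arm_transpose (D : Finset (ℕ × ℕ)) (c : ℕ × ℕ) : arm (transpose D) c.swap = leg D c := by
  simp only [arm, leg, transpose, Finset.filter_map, Finset.card_map]
  rfl

lemma rowLen_eq_add_arm {D : Finset (ℕ × ℕ)} (hD : IsYoung D) {c : ℕ × ℕ} (hc : c ∈ D) :
    rowLen D c.2 = c.1 + 1 + arm D c := by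
  have hweaklyLeft : D.filter (fun d => d.2 = c.2 ∧ ¬ c.1 < d.1)
      = (Finset.range (c.1 + 1)).map (Function.Embedding.sectL ℕ c.2) := by
    ext ⟨x, y⟩
    simp only [Finset.mem_filter, Finset.mem_map, Finset.mem_range, Function.Embedding.sectL_apply,
      Prod.mk.injEq, not_lt]
    constructor
    · rintro ⟨-, rfl, hx⟩
      exact ⟨x, by omega, rfl, rfl⟩
    · rintro ⟨x, hx, rfl, rfl⟩
      exact ⟨hD c.1 c.2 x c.2 hc (by omega) le_rfl, rfl, by omega⟩
  rw [rowLen, arm, ← Finset.card_filter_add_card_filter_not (fun d => c.1 < d.1),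
    Finset.filter_filter, Finset.filter_filter, hweaklyLeft, Finset.card_map, Finset.card_range,
    add_comm]

lemma colLen_eq_add_leg {D : Finset (ℕ × ℕ)} (hD : IsYoung D) {c : ℕ × ℕ} (hc : c ∈ D) :
    colLen D c.1 = c.2 + 1 + leg D c := by
  have hc' : c.swap ∈ transpose D := by simpa [transpose] using hc
  simpa [rowLen_transpose, arm_transpose] using rowLen_eq_add_arm (isYoung_transpose hD) hc'

theorem wlabel_eq_nlabel_add (p q P : ℕ) {D : Finset (ℕ × ℕ)} (hD : IsYoung D) {c : ℕ × ℕ}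
    (hc : c ∈ D) :
    wlabel D p q P c.1 = nlabel D p q P c.2 + ((arm D c : ℤ) + 1) * q - (leg D c : ℤ) * p := by
  rw [wlabel, nlabel, rowLen_eq_add_arm hD hc, colLen_eq_add_leg hD hc]
  push_cast
  ring

theorem slope_to_edges_inside_general (D : Finset (ℕ × ℕ)) (hD : IsYoung D)
    (p q K : ℕ) (c : ℕ × ℕ) (hc : c ∈ D) :
    wlabel D p q (K * p) c.1
        = nlabel D p q (K * p) c.2 + ((arm D c : ℤ) + 1) * q - (leg D c : ℤ) * p ∧
    (wlabel D p q (K * p) c.1 = nlabel D p q (K * p) c.2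
        ↔ p * leg D c = q * (arm D c + 1)) ∧
    (wlabel D p q (K * p) c.1 < nlabel D p q (K * p) c.2
        ↔ q * (arm D c + 1) < p * leg D c) := by
  have E := wlabel_eq_nlabel_add p q (K * p) hD hc
  refine ⟨E, ?_, ?_⟩ <;> rw [E] <;> zify <;> constructor <;> intro h <;> linarith

theorem slope_to_edges_inside (D : Finset (ℕ × ℕ)) (hD : IsYoung D)
    (p q K : ℕ) (hp : 0 < p) (hq : 0 < q) (hK : 0 < K) (hpq : Nat.Coprime p q)
    (hdiag : ∀ c ∈ D, q * c.1 + p * c.2 + p + q ≤ K * p * q)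
    (c : ℕ × ℕ) (hc : c ∈ D) :
    wlabel D p q (K * p) c.1
        = nlabel D p q (K * p) c.2 + ((arm D c : ℤ) + 1) * q - (leg D c : ℤ) * p ∧
    (wlabel D p q (K * p) c.1 = nlabel D p q (K * p) c.2
        ↔ p * leg D c = q * (arm D c + 1)) ∧
    (wlabel D p q (K * p) c.1 < nlabel D p q (K * p) c.2
        ↔ q * (arm D c + 1) < p * leg D c) :=
  slope_to_edges_inside_general D hD p q K c hc
end

section
/- Let D be a Young diagram fitting below the diagonal of R_{P,Q} (P = Kp, Q = Kq, p, q coprime positive, K positive). For a box c \in R_{P,Q} \ D, let e_c be the westward boundary edge in the column of c entering vertex labeled v, and n_c the northward boundary edge in the row of c entering vertex labeled w. Then w = v + a(c)·q - (l(c)+1)·p. In particular w = v iff p·(l(c)+1) = q·a(c), and v < w iff p·(l(c)+1) < q·a(c). -/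
/-! Every row and column of a Young diagram is an initial segment of `ℕ`, so the boxes outside
`D` to the left of `c = (x, y)` are exactly those with `rowLen D y ≤ x' < x`, giving
`a(c) = x - rowLen D y`, and likewise `l(c) = y - colLen D x`. Substituting these into the explicit
labels of the two edges gives the identity, and the two equivalences are rearrangements of it. -/

theorem Finset.mem_iff_lt_card_of_downward_closed {s : Finset ℕ}
    (hs : ∀ a ∈ s, ∀ b ≤ a, b ∈ s) (a : ℕ) : a ∈ s ↔ a < s.card := by
  constructor
  · intro ha
    have hsub : Finset.range (a + 1) ⊆ s := fun b hb =>
      hs a ha b (Nat.lt_succ_iff.mp (Finset.mem_range.mp hb))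
    simpa using Finset.card_le_card hsub
  · intro hlt
    by_contra ha
    have hsub : s ⊆ Finset.range a := fun b hb =>
      Finset.mem_range.mpr (lt_of_not_ge fun hab => ha (hs b hb a hab))
    simpa using (Finset.card_le_card hsub).trans_lt' hlt

namespace IsYoung

variable {D : Finset (ℕ × ℕ)}

theorem mem_iff_lt_rowLen (hD : IsYoung D) (x y : ℕ) : (x, y) ∈ D ↔ x < rowLen D y := by
  have hrow : rowLen D y = ((D.filter fun c => c.2 = y).image Prod.fst).card :=
    (Finset.card_image_of_injOn fun c hc d hd h =>
      Prod.ext h (((Finset.mem_filter.mp hc).2).trans (Finset.mem_filter.mp hd).2.symm)).symm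
  rw [hrow, ← Finset.mem_iff_lt_card_of_downward_closed]
  · simp
  · simp only [Finset.mem_image, Finset.mem_filter]
    rintro _ ⟨⟨a, _⟩, ⟨ha, hy⟩, rfl⟩ b hb
    exact ⟨(b, y), ⟨hD _ _ b y ha hb hy.ge, rfl⟩, rfl⟩

theorem mem_iff_lt_colLen (hD : IsYoung D) (x y : ℕ) : (x, y) ∈ D ↔ y < colLen D x := by
  have hcol : colLen D x = ((D.filter fun c => c.1 = x).image Prod.snd).card :=
    (Finset.card_image_of_injOn fun c hc d hd h =>
      Prod.ext (((Finset.mem_filter.mp hc).2).trans (Finset.mem_filter.mp hd).2.symm) h).symm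
  rw [hcol, ← Finset.mem_iff_lt_card_of_downward_closed]
  · simp
  · simp only [Finset.mem_image, Finset.mem_filter]
    rintro _ ⟨⟨_, a⟩, ⟨ha, hx⟩, rfl⟩ b hb
    exact ⟨(x, b), ⟨hD _ _ x b ha hx.ge hb, rfl⟩, rfl⟩

theorem coArm_eq (hD : IsYoung D) (c : ℕ × ℕ) : coArm D c = c.1 - rowLen D c.2 := by
  have : (Finset.range c.1).filter (fun x' => (x', c.2) ∉ D) = Finset.Ico (rowLen D c.2) c.1 := by
    ext a
    simp only [Finset.mem_filter, Finset.mem_range, Finset.mem_Ico, hD.mem_iff_lt_rowLen]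
    omega
  rw [coArm, this, Nat.card_Ico]

theorem coLeg_eq (hD : IsYoung D) (c : ℕ × ℕ) : coLeg D c = c.2 - colLen D c.1 := by
  have : (Finset.range c.2).filter (fun y' => (c.1, y') ∉ D) = Finset.Ico (colLen D c.1) c.2 := by
    ext a
    simp only [Finset.mem_filter, Finset.mem_range, Finset.mem_Ico, hD.mem_iff_lt_colLen]
    omega
  rw [coLeg, this, Nat.card_Ico]

theorem nlabel_eq_wlabel_add (hD : IsYoung D) (p q P : ℕ) {c : ℕ × ℕ} (hc : c ∉ D) :
    nlabel D p q P c.2 = wlabel D p q P c.1 + (coArm D c : ℤ) * q - ((coLeg D c : ℤ) + 1) * p := by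
  have hrow : rowLen D c.2 ≤ c.1 := not_lt.mp ((hD.mem_iff_lt_rowLen c.1 c.2).not.mp hc)
  have hcol : colLen D c.1 ≤ c.2 := not_lt.mp ((hD.mem_iff_lt_colLen c.1 c.2).not.mp hc)
  rw [nlabel, wlabel, hD.coArm_eq, hD.coLeg_eq, Nat.cast_sub hrow, Nat.cast_sub hcol]
  ring

end IsYoung

theorem slope_to_edges_outside_general (D : Finset (ℕ × ℕ)) (hD : IsYoung D)
    (p q K : ℕ)
    (c : ℕ × ℕ) (hc : c ∉ D) :
    nlabel D p q (K * p) c.2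
        = wlabel D p q (K * p) c.1 + (coArm D c : ℤ) * q - ((coLeg D c : ℤ) + 1) * p ∧
    (nlabel D p q (K * p) c.2 = wlabel D p q (K * p) c.1
        ↔ p * (coLeg D c + 1) = q * coArm D c) ∧
    (wlabel D p q (K * p) c.1 < nlabel D p q (K * p) c.2
        ↔ p * (coLeg D c + 1) < q * coArm D c) := by
  have key := hD.nlabel_eq_wlabel_add p q (K * p) hc
  refine ⟨key, ?_, ?_⟩ <;> rw [key] <;> zify <;> constructor <;> intro h <;> linarith

theorem slope_to_edges_outside (D : Finset (ℕ × ℕ)) (hD : IsYoung D)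
    (p q K : ℕ) (hp : 0 < p) (hq : 0 < q) (hK : 0 < K) (hpq : Nat.Coprime p q)
    (hdiag : ∀ c ∈ D, q * c.1 + p * c.2 + p + q ≤ K * p * q)
    (c : ℕ × ℕ) (hc1 : c.1 < K * p) (hc2 : c.2 < K * q) (hc : c ∉ D) :
    nlabel D p q (K * p) c.2
        = wlabel D p q (K * p) c.1 + (coArm D c : ℤ) * q - ((coLeg D c : ℤ) + 1) * p ∧
    (nlabel D p q (K * p) c.2 = wlabel D p q (K * p) c.1
        ↔ p * (coLeg D c + 1) = q * coArm D c) ∧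
    (wlabel D p q (K * p) c.1 < nlabel D p q (K * p) c.2
        ↔ p * (coLeg D c + 1) < q * coArm D c) :=
  slope_to_edges_outside_general D hD p q K c hc
end

section
/- Let D be a Young diagram fitting below the diagonal of R_{P,Q} (P = Kp, Q = Kq, p,q coprime positive, K positive integer). Then c^-_{q/p}(D) := |{c \in D : p·(l(c)+1) = q·a(c)}| equals |{c \in R_{P,Q} \ D : p·(l(c)+1) = q·a(c)}| - (K - |N_{in}(0)|), where N_{in}(0) is the set of northward edges of the boundary path entering a vertex labeled 0. -/
open Finset

section Basics

lemma downclosed_eq_range (S : Finset ℕ) (h : ∀ a ∈ S, ∀ b, b ≤ a → b ∈ S) :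
    S = Finset.range S.card := by
  have hsub : S ⊆ Finset.range S.card := by
    intro a ha
    by_contra hc
    simp only [Finset.mem_range, not_lt] at hc
    have hsub2 : Finset.range (a + 1) ⊆ S := by
      intro b hb
      exact h a ha b (Nat.lt_succ_iff.mp (Finset.mem_range.mp hb))
    have := Finset.card_le_card hsub2
    simp only [Finset.card_range] at this
    omega
  exact Finset.eq_of_subset_of_card_le hsub (by simp)

variable {D : Finset (ℕ × ℕ)}

lemma mem_iff_lt_colLen (hD : IsYoung D) (x y : ℕ) : (x, y) ∈ D ↔ y < colLen D x := by
  classical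
  set S : Finset ℕ := (D.filter fun c => c.1 = x).image Prod.snd with hS
  have hcard : S.card = colLen D x := by
    rw [hS, colLen]
    apply Finset.card_image_of_injOn
    intro c hc c' hc' hcc
    simp only [Finset.mem_coe, Finset.mem_filter] at hc hc'
    exact Prod.ext (hc.2.trans hc'.2.symm) hcc
  have hmem : ∀ y', (x, y') ∈ D ↔ y' ∈ S := by
    intro y'
    simp only [hS, Finset.mem_image, Finset.mem_filter]
    constructor
    · intro h; exact ⟨(x, y'), ⟨h, rfl⟩, rfl⟩
    · rintro ⟨c, ⟨hc, hc1⟩, hc2⟩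
      have : c = (x, y') := Prod.ext hc1 hc2
      rwa [this] at hc
  have hdc : ∀ a ∈ S, ∀ b, b ≤ a → b ∈ S := by
    intro a ha b hb
    rw [← hmem] at ha ⊢
    exact hD x a x b ha le_rfl hb
  rw [hmem, downclosed_eq_range S hdc, Finset.mem_range, hcard]

lemma mem_iff_lt_rowLen (hD : IsYoung D) (x y : ℕ) : (x, y) ∈ D ↔ x < rowLen D y := by
  classical
  set S : Finset ℕ := (D.filter fun c => c.2 = y).image Prod.fst with hS
  have hcard : S.card = rowLen D y := by
    rw [hS, rowLen]
    apply Finset.card_image_of_injOn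
    intro c hc c' hc' hcc
    simp only [Finset.mem_coe, Finset.mem_filter] at hc hc'
    exact Prod.ext hcc (hc.2.trans hc'.2.symm)
  have hmem : ∀ x', (x', y) ∈ D ↔ x' ∈ S := by
    intro x'
    simp only [hS, Finset.mem_image, Finset.mem_filter]
    constructor
    · intro h; exact ⟨(x', y), ⟨h, rfl⟩, rfl⟩
    · rintro ⟨c, ⟨hc, hc1⟩, hc2⟩
      have : c = (x', y) := Prod.ext hc2 hc1
      rwa [this] at hc
  have hdc : ∀ a ∈ S, ∀ b, b ≤ a → b ∈ S := by
    intro a ha b hb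
    rw [← hmem] at ha ⊢
    exact hD a y b y ha hb le_rfl
  rw [hmem, downclosed_eq_range S hdc, Finset.mem_range, hcard]

lemma colLen_eq_of_iff (hD : IsYoung D) {x m : ℕ} (h : ∀ y, (x, y) ∈ D ↔ y < m) :
    colLen D x = m := by
  have h1 := fun y => (mem_iff_lt_colLen hD x y).symm.trans (h y)
  rcases Nat.lt_trichotomy (colLen D x) m with hlt | he | hgt
  · have := (h1 (colLen D x)).mpr hlt; omega
  · exact he
  · have := (h1 m).mp hgt; omega

lemma rowLen_eq_of_iff (hD : IsYoung D) {y m : ℕ} (h : ∀ x, (x, y) ∈ D ↔ x < m) :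
    rowLen D y = m := by
  have h1 := fun x => (mem_iff_lt_rowLen hD x y).symm.trans (h x)
  rcases Nat.lt_trichotomy (rowLen D y) m with hlt | he | hgt
  · have := (h1 (rowLen D y)).mpr hlt; omega
  · exact he
  · have := (h1 m).mp hgt; omega

lemma colLen_anti (hD : IsYoung D) {x x' : ℕ} (h : x ≤ x') : colLen D x' ≤ colLen D x := by
  by_contra hc
  push_neg at hc
  have hm : (x', colLen D x) ∈ D := (mem_iff_lt_colLen hD _ _).mpr hc
  have : (x, colLen D x) ∈ D := hD x' (colLen D x) x (colLen D x) hm h le_rfl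
  rw [mem_iff_lt_colLen hD] at this
  omega

end Basics
section Counting

open Finset

variable {n : ℕ}

lemma filt_succ (n : ℕ) (f : ℕ → Prop) [DecidablePred f] :
    ((Finset.range (n + 1)).filter f).card
      = ((Finset.range n).filter f).card + (if f n then 1 else 0) := by
  rw [Finset.range_add_one, Finset.filter_insert]
  split_ifs with h
  · rw [Finset.card_insert_of_notMem (by simp)]
  · simp

lemma filt_shift (n : ℕ) (f : ℕ → Prop) [DecidablePred f] :
    ((Finset.range (n + 1)).filter f).card
      = ((Finset.range n).filter fun x => f (x + 1)).card + (if f 0 then 1 else 0) := by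
  induction n with
  | zero =>
      simp only [Finset.range_one, Finset.range_zero, Finset.filter_empty, Finset.card_empty,
        zero_add]
      rw [show ({0} : Finset ℕ) = insert 0 ∅ from rfl, Finset.filter_insert]
      split_ifs <;> simp
  | succ m ih =>
      rw [filt_succ (m + 1) f, ih, filt_succ m (fun x => f (x + 1))]
      ring

/-- key shift identity, addition form -/
lemma filt_shift_add (n : ℕ) (f : ℕ → Prop) [DecidablePred f] :
    ((Finset.range n).filter fun x => f (x + 1)).card + (if f 0 then 1 else 0)
      = ((Finset.range n).filter f).card + (if f n then 1 else 0) := by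
  rw [← filt_shift n f, filt_succ n f]

lemma filt_point (s : Finset ℕ) (a : ℕ) (f : ℕ → Prop) [DecidablePred f] (ha : a ∈ s) :
    (s.filter f).card = ((s.erase a).filter f).card + (if f a then 1 else 0) := by
  conv_lhs => rw [← Finset.insert_erase ha]
  rw [Finset.filter_insert]
  split_ifs with h
  · rw [Finset.card_insert_of_notMem (by simp)]
  · simp

lemma filt_update (s : Finset ℕ) (a : ℕ) (f g : ℕ → Prop) [DecidablePred f] [DecidablePred g]
    (ha : a ∈ s) (h : ∀ x ∈ s, x ≠ a → (f x ↔ g x)) :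
    (s.filter f).card + (if g a then 1 else 0)
      = (s.filter g).card + (if f a then 1 else 0) := by
  rw [filt_point s a f ha, filt_point s a g ha]
  have : (s.erase a).filter f = (s.erase a).filter g := by
    apply Finset.filter_congr
    intro x hx
    have hx' := Finset.mem_erase.mp hx
    exact h x hx'.2 hx'.1
  rw [this]; ring

end Counting

set_option linter.unusedSectionVars false

section Corner

open Finset

variable {D : Finset (ℕ × ℕ)} {x0 y0 : ℕ}

/-- corner existence: top box of the last nonempty column -/
lemma corner_exists (hD : IsYoung D) (hne : D.Nonempty) :
    ∃ x0 y0, (x0, y0) ∈ D ∧ colLen D x0 = y0 + 1 ∧ ∀ c ∈ D, c.1 ≤ x0 := by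
  classical
  have hne' : (D.image Prod.fst).Nonempty := hne.image _
  set x0 := (D.image Prod.fst).max' hne' with hx0
  have hmax : ∀ c ∈ D, c.1 ≤ x0 := by
    intro c hc
    exact Finset.le_max' _ _ (Finset.mem_image_of_mem _ hc)
  have hxmem : x0 ∈ D.image Prod.fst := Finset.max'_mem _ _
  obtain ⟨c, hc, hc1⟩ := Finset.mem_image.mp hxmem
  have hpos : 0 < colLen D x0 := by
    have : (x0, c.2) ∈ D := by rw [← hc1]; exact hc
    have := (mem_iff_lt_colLen hD _ _).mp this
    omega
  refine ⟨x0, colLen D x0 - 1, ?_, by omega, hmax⟩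
  rw [mem_iff_lt_colLen hD]
  omega

variable (hD : IsYoung D) (h1 : (x0, y0) ∈ D) (h2 : colLen D x0 = y0 + 1)
  (h3 : ∀ c ∈ D, c.1 ≤ x0)

include hD h1 h2 h3

lemma corner_rowLen : rowLen D y0 = x0 + 1 := by
  apply rowLen_eq_of_iff hD
  intro x
  constructor
  · intro h; have := h3 _ h; simpa using Nat.lt_succ_of_le this
  · intro h
    exact hD x0 y0 x y0 h1 (by omega) le_rfl

lemma corner_rowLen_below {y : ℕ} (hy : y ≤ y0) : rowLen D y = x0 + 1 := by
  apply rowLen_eq_of_iff hD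
  intro x
  constructor
  · intro h; have := h3 _ h; simpa using Nat.lt_succ_of_le this
  · intro h
    exact hD x0 y0 x y h1 (by omega) hy

lemma corner_colLen_right {x : ℕ} (hx : x0 < x) : colLen D x = 0 := by
  apply colLen_eq_of_iff hD
  intro y
  simp only [Nat.not_lt_zero, iff_false]
  intro h
  have := h3 _ h
  simp at this; omega

lemma corner_rowLen_above {y : ℕ} (hy : y0 < y) : rowLen D y ≤ x0 := by
  by_contra hc
  push_neg at hc
  have : (x0, y) ∈ D := (mem_iff_lt_rowLen hD _ _).mpr hc
  have := (mem_iff_lt_colLen hD _ _).mp this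
  omega

lemma corner_young_erase : IsYoung (D.erase (x0, y0)) := by
  intro x y x' y' hm hx hy
  rw [Finset.mem_erase] at hm ⊢
  obtain ⟨hne, hm⟩ := hm
  refine ⟨?_, hD x y x' y' hm hx hy⟩
  intro hc
  rw [Prod.mk.injEq] at hc
  obtain ⟨he1, he2⟩ := hc
  have hxx : x ≤ x0 := h3 _ hm
  have hyy := (mem_iff_lt_colLen hD x y).mp hm
  have hx0 : x = x0 := by omega
  have hcc : colLen D x ≤ colLen D x0 := colLen_anti hD (by omega)
  have hy0 : y = y0 := by omega
  exact hne (by rw [hx0, hy0])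

lemma corner_colLen_erase_self : colLen (D.erase (x0, y0)) x0 = y0 := by
  apply colLen_eq_of_iff (corner_young_erase hD h1 h2 h3)
  intro y
  rw [Finset.mem_erase, mem_iff_lt_colLen hD]
  simp only [ne_eq, Prod.mk.injEq, true_and, not_and]
  constructor
  · rintro ⟨hne, hlt⟩
    have : y ≠ y0 := fun h => by simp [h] at hne
    omega
  · intro h
    constructor
    · intro hy; omega
    · omega

lemma corner_rowLen_erase_self : rowLen (D.erase (x0, y0)) y0 = x0 := by
  apply rowLen_eq_of_iff (corner_young_erase hD h1 h2 h3)
  intro x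
  rw [Finset.mem_erase, mem_iff_lt_rowLen hD, corner_rowLen hD h1 h2 h3]
  simp only [ne_eq, Prod.mk.injEq, and_true, not_and]
  constructor
  · rintro ⟨hne, hlt⟩
    have : x ≠ x0 := fun h => by simp [h] at hne
    omega
  · intro h
    constructor
    · intro hx; omega
    · omega

omit hD h1 h2 h3

lemma colLen_erase_ne {x : ℕ} (hx : x ≠ x0) : colLen (D.erase (x0, y0)) x = colLen D x := by
  unfold colLen
  congr 1
  ext c
  simp only [Finset.mem_filter, Finset.mem_erase]
  constructor
  · rintro ⟨⟨_, hm⟩, he⟩; exact ⟨hm, he⟩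
  · rintro ⟨hm, he⟩
    refine ⟨⟨?_, hm⟩, he⟩
    rintro rfl
    exact hx he.symm

lemma rowLen_erase_ne {y : ℕ} (hy : y ≠ y0) : rowLen (D.erase (x0, y0)) y = rowLen D y := by
  unfold rowLen
  congr 1
  ext c
  simp only [Finset.mem_filter, Finset.mem_erase]
  constructor
  · rintro ⟨⟨_, hm⟩, he⟩; exact ⟨hm, he⟩
  · rintro ⟨hm, he⟩
    refine ⟨⟨?_, hm⟩, he⟩
    rintro rfl
    exact hy he.symm

end Corner
section Flow

open Finset

lemma wlabel_empty (p q P' x : ℕ) : wlabel ∅ p q P' x = ((P' : ℤ) - x) * q := by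
  simp [wlabel, colLen]

lemma nlabel_empty (p q P' y : ℕ) : nlabel ∅ p q P' y = (P' : ℤ) * q - ((y : ℤ) + 1) * p := by
  simp [nlabel, rowLen]

/-- counts of west-edge ends for the empty diagram, reversed index -/
def WcntE (q P' : ℕ) (w : ℤ) : ℕ :=
  ((Finset.range P').filter fun k : ℕ => ((k : ℤ) + 1) * q = w).card

lemma Win_empty_eq (p q P' : ℕ) (w : ℤ) : Win ∅ p q P' w = WcntE q P' w := by
  unfold Win WcntE
  apply Finset.card_bij' (fun x _ => P' - 1 - x) (fun k _ => P' - 1 - k)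
  · intro x hx
    simp only [Finset.mem_filter, Finset.mem_range, wlabel_empty] at hx ⊢
    refine ⟨by omega, ?_⟩
    have hc : ((P' - 1 - x : ℕ) : ℤ) = (P' : ℤ) - 1 - x := by omega
    rw [hc, ← hx.2]; ring
  · intro k hk
    simp only [Finset.mem_filter, Finset.mem_range, wlabel_empty] at hk ⊢
    refine ⟨by omega, ?_⟩
    have hc : ((P' - 1 - k : ℕ) : ℤ) = (P' : ℤ) - 1 - k := by omega
    rw [hc, ← hk.2]; ring
  · intro x hx
    simp only [Finset.mem_filter, Finset.mem_range] at hx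
    omega
  · intro k hk
    simp only [Finset.mem_filter, Finset.mem_range] at hk
    omega

lemma WcntE_succ (q P' : ℕ) (w : ℤ) :
    WcntE q (P' + 1) w = WcntE q P' w + (if ((P' : ℤ) + 1) * q = w then 1 else 0) := by
  exact filt_succ P' (fun k : ℕ => ((k : ℤ) + 1) * q = w)

lemma Nin_empty_succ (p q P' Q' : ℕ) (v : ℤ) :
    Nin ∅ p q P' (Q' + 1) v
      = Nin ∅ p q P' Q' v + (if (P' : ℤ) * q - ((Q' : ℤ) + 1) * p = v then 1 else 0) := by
  unfold Nin
  rw [filt_succ Q' (fun y => nlabel ∅ p q P' y = v)]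
  rw [show nlabel ∅ p q P' Q' = (P' : ℤ) * q - ((Q' : ℤ) + 1) * p from nlabel_empty p q P' Q']

lemma Wshift (q : ℕ) (v : ℤ) : ∀ P' : ℕ,
    WcntE q P' (v + q) + (if v = (P' : ℤ) * q then 1 else 0)
      = WcntE q P' v + (if v = 0 then 1 else 0) := by
  intro P'
  induction P' with
  | zero =>
      simp only [WcntE, Finset.range_zero, Finset.filter_empty, Finset.card_empty]
      have h : (if v = ((0 : ℕ) : ℤ) * q then 1 else 0) = if v = 0 then 1 else 0 := by
        refine if_congr ?_ rfl rfl
        push_cast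
        constructor <;> intro h' <;> linarith
      rw [h]
  | succ m ih =>
      rw [WcntE_succ q m (v + q), WcntE_succ q m v]
      have i1 : (if ((m : ℤ) + 1) * q = v + q then 1 else 0)
          = (if v = (m : ℤ) * q then 1 else 0) := by
        refine if_congr ?_ rfl rfl
        constructor <;> intro h' <;> linarith
      have i2 : (if v = ((m + 1 : ℕ) : ℤ) * q then 1 else 0)
          = (if ((m : ℤ) + 1) * q = v then 1 else 0) := by
        refine if_congr ?_ rfl rfl
        push_cast
        constructor <;> intro h' <;> linarith
      rw [i1, i2]
      omega

lemma Nshift (p q P' : ℕ) (v : ℤ) : ∀ Q' : ℕ,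
    Nin ∅ p q P' Q' v + (if v = (P' : ℤ) * q then 1 else 0)
      = Nin ∅ p q P' Q' (v - p) + (if v = (P' : ℤ) * q - (Q' : ℤ) * p then 1 else 0) := by
  intro Q'
  induction Q' with
  | zero =>
      simp only [Nin, Finset.range_zero, Finset.filter_empty, Finset.card_empty]
      have h : (if v = (P' : ℤ) * q - ((0 : ℕ) : ℤ) * p then 1 else 0)
          = if v = (P' : ℤ) * q then 1 else 0 := by
        refine if_congr ?_ rfl rfl
        push_cast
        constructor <;> intro h' <;> linarith
      rw [h]
  | succ m ih =>
      rw [Nin_empty_succ p q P' m v, Nin_empty_succ p q P' m (v - p)]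
      have i1 : (if (P' : ℤ) * q - ((m : ℤ) + 1) * p = v - p then 1 else 0)
          = (if v = (P' : ℤ) * q - (m : ℤ) * p then 1 else 0) := by
        refine if_congr ?_ rfl rfl
        constructor <;> intro h' <;> linarith
      have i2 : (if v = (P' : ℤ) * q - ((m + 1 : ℕ) : ℤ) * p then 1 else 0)
          = (if (P' : ℤ) * q - ((m : ℤ) + 1) * p = v then 1 else 0) := by
        refine if_congr ?_ rfl rfl
        push_cast
        constructor <;> intro h' <;> linarith
      rw [i1, i2]
      omega

theorem flow (p q : ℕ) (E : Finset (ℕ × ℕ)) :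
    IsYoung E → ∀ P' Q' : ℕ, (∀ c ∈ E, c.1 < P' ∧ c.2 < Q') → ∀ v : ℤ,
    (Win E p q P' v : ℤ) + (Nin E p q P' Q' v : ℤ) + (if v = 0 then 1 else 0)
      = (Win E p q P' (v + q) : ℤ) + (Nin E p q P' Q' (v - p) : ℤ)
        + (if v = (P' : ℤ) * q - (Q' : ℤ) * p then 1 else 0) := by
  induction E using Finset.strongInduction with
  | _ E ih =>
    intro hE P' Q' hrect v
    rcases Finset.eq_empty_or_nonempty E with rfl | hne
    · have hW := Wshift q v P'
      have hW2 := Win_empty_eq p q P' v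
      have hW3 := Win_empty_eq p q P' (v + q)
      have hN := Nshift p q P' v Q'
      rw [hW2, hW3]
      have hWz := congrArg (fun n : ℕ => (n : ℤ)) hW
      have hNz := congrArg (fun n : ℕ => (n : ℤ)) hN
      push_cast [apply_ite (fun n : ℕ => (n : ℤ))] at hWz hNz
      push_cast
      linarith
    · obtain ⟨x0, y0, h1, h2, h3⟩ := corner_exists hE hne
      set E₀ := E.erase (x0, y0) with hE₀def
      have hssub : E₀ ⊂ E := Finset.erase_ssubset h1
      have hE₀ : IsYoung E₀ := corner_young_erase hE h1 h2 h3
      have hrect₀ : ∀ c ∈ E₀, c.1 < P' ∧ c.2 < Q' :=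
        fun c hc => hrect c (Finset.mem_of_mem_erase hc)
      have hx0P : x0 < P' := (hrect _ h1).1
      have hy0Q : y0 < Q' := (hrect _ h1).2
      set u' : ℤ := ((P' : ℤ) - x0 - 1) * q - (y0 : ℤ) * p with hu'
      have hwE : wlabel E p q P' x0 = u' + q - p := by
        rw [wlabel, h2, hu']; push_cast; ring
      have hwE₀ : wlabel E₀ p q P' x0 = u' + q := by
        rw [wlabel, corner_colLen_erase_self hE h1 h2 h3, hu']; push_cast; ring
      have hnE : nlabel E p q P' y0 = u' - p := by
        rw [nlabel, corner_rowLen hE h1 h2 h3, hu']; push_cast; ring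
      have hnE₀ : nlabel E₀ p q P' y0 = u' + q - p := by
        rw [nlabel, corner_rowLen_erase_self hE h1 h2 h3, hu']; push_cast; ring
      have hwne : ∀ x, x ≠ x0 → wlabel E p q P' x = wlabel E₀ p q P' x := by
        intro x hx
        rw [wlabel, wlabel, colLen_erase_ne hx]
      have hnne : ∀ y, y ≠ y0 → nlabel E p q P' y = nlabel E₀ p q P' y := by
        intro y hy
        rw [nlabel, nlabel, rowLen_erase_ne hy]
      have hWupd : ∀ w : ℤ, (Win E p q P' w : ℤ) + (if u' + q = w then 1 else 0)
          = (Win E₀ p q P' w : ℤ) + (if u' + q - p = w then 1 else 0) := by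
        intro w
        have key := filt_update (Finset.range P') x0
          (fun x => wlabel E p q P' x = w) (fun x => wlabel E₀ p q P' x = w)
          (Finset.mem_range.mpr hx0P)
          (fun x _ hx => by
            show wlabel E p q P' x = w ↔ wlabel E₀ p q P' x = w
            rw [hwne x hx])
        have key2 := congrArg (fun n : ℕ => (n : ℤ)) key
        push_cast [apply_ite (fun n : ℕ => (n : ℤ))] at key2
        rw [hwE, hwE₀] at key2
        unfold Win
        linarith [key2]
      have hNupd : ∀ w : ℤ, (Nin E p q P' Q' w : ℤ) + (if u' + q - p = w then 1 else 0)
          = (Nin E₀ p q P' Q' w : ℤ) + (if u' - p = w then 1 else 0) := by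
        intro w
        have key := filt_update (Finset.range Q') y0
          (fun y => nlabel E p q P' y = w) (fun y => nlabel E₀ p q P' y = w)
          (Finset.mem_range.mpr hy0Q)
          (fun y _ hy => by
            show nlabel E p q P' y = w ↔ nlabel E₀ p q P' y = w
            rw [hnne y hy])
        have key2 := congrArg (fun n : ℕ => (n : ℤ)) key
        push_cast [apply_ite (fun n : ℕ => (n : ℤ))] at key2
        rw [hnE, hnE₀] at key2
        unfold Nin
        linarith [key2]
      have hIH := ih E₀ hssub hE₀ P' Q' hrect₀ v
      have k1 := hWupd v
      have k2 := hWupd (v + q)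
      have k3 := hNupd v
      have k4 := hNupd (v - p)
      have n1 : (if u' + q = v + q then (1:ℤ) else 0) = if u' = v then 1 else 0 := by
        refine if_congr ?_ rfl rfl
        constructor <;> intro h' <;> linarith
      have n2 : (if u' + q - p = v + q then (1:ℤ) else 0) = if u' - p = v then 1 else 0 := by
        refine if_congr ?_ rfl rfl
        constructor <;> intro h' <;> linarith
      have n3 : (if u' + q - p = v - p then (1:ℤ) else 0) = if u' + q = v then 1 else 0 := by
        refine if_congr ?_ rfl rfl
        constructor <;> intro h' <;> linarith
      have n4 : (if u' - p = v - p then (1:ℤ) else 0) = if u' = v then 1 else 0 := by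
        refine if_congr ?_ rfl rfl
        constructor <;> intro h' <;> linarith
      rw [n1, n2] at k2
      rw [n3, n4] at k4
      linarith [k1, k2, k3, k4, hIH]

end Flow
section Trans

open Finset

variable {D : Finset (ℕ × ℕ)}

lemma arm_eq (hD : IsYoung D) {x y : ℕ} (h : (x, y) ∈ D) :
    (arm D (x, y) : ℤ) = (rowLen D y : ℤ) - x - 1 := by
  have hx : x < rowLen D y := (mem_iff_lt_rowLen hD x y).mp h
  have hset : D.filter (fun d => d.2 = y ∧ x < d.1)
      = (Finset.Ico (x + 1) (rowLen D y)).image (fun t => (t, y)) := by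
    ext c
    simp only [Finset.mem_filter, Finset.mem_image, Finset.mem_Ico]
    constructor
    · rintro ⟨hm, h2, h1⟩
      refine ⟨c.1, ⟨by omega, ?_⟩, ?_⟩
      · rw [← h2]
        exact (mem_iff_lt_rowLen hD c.1 c.2).mp hm
      · rw [← h2]
    · rintro ⟨t, ⟨ht1, ht2⟩, rfl⟩
      exact ⟨(mem_iff_lt_rowLen hD t y).mpr ht2, rfl, by omega⟩
  have hcard : arm D (x, y) = rowLen D y - (x + 1) := by
    rw [arm, hset, Finset.card_image_of_injective _ (fun a b hab => by
      simpa using congrArg Prod.fst hab), Nat.card_Ico]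
  rw [hcard]
  omega

lemma leg_eq (hD : IsYoung D) {x y : ℕ} (h : (x, y) ∈ D) :
    (leg D (x, y) : ℤ) = (colLen D x : ℤ) - y - 1 := by
  have hy : y < colLen D x := (mem_iff_lt_colLen hD x y).mp h
  have hset : D.filter (fun d => d.1 = x ∧ y < d.2)
      = (Finset.Ico (y + 1) (colLen D x)).image (fun t => (x, t)) := by
    ext c
    simp only [Finset.mem_filter, Finset.mem_image, Finset.mem_Ico]
    constructor
    · rintro ⟨hm, h2, h1⟩
      refine ⟨c.2, ⟨by omega, ?_⟩, ?_⟩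
      · rw [← h2]
        exact (mem_iff_lt_colLen hD c.1 c.2).mp hm
      · rw [← h2]
    · rintro ⟨t, ⟨ht1, ht2⟩, rfl⟩
      exact ⟨(mem_iff_lt_colLen hD x t).mpr ht2, rfl, by omega⟩
  have hcard : leg D (x, y) = colLen D x - (y + 1) := by
    rw [leg, hset, Finset.card_image_of_injective _ (fun a b hab => by
      simpa using congrArg Prod.snd hab), Nat.card_Ico]
  rw [hcard]
  omega

lemma coArm_eq (hD : IsYoung D) {x y : ℕ} (h : rowLen D y ≤ x) :
    (coArm D (x, y) : ℤ) = (x : ℤ) - rowLen D y := by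
  have hset : (Finset.range x).filter (fun x' => (x', y) ∉ D) = Finset.Ico (rowLen D y) x := by
    ext t
    simp only [Finset.mem_filter, Finset.mem_range, Finset.mem_Ico, mem_iff_lt_rowLen hD]
    omega
  have hcard : coArm D (x, y) = x - rowLen D y := by
    rw [coArm, hset, Nat.card_Ico]
  rw [hcard]
  omega

lemma coLeg_eq (hD : IsYoung D) {x y : ℕ} (h : colLen D x ≤ y) :
    (coLeg D (x, y) : ℤ) = (y : ℤ) - colLen D x := by
  have hset : (Finset.range y).filter (fun y' => (x, y') ∉ D) = Finset.Ico (colLen D x) y := by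
    ext t
    simp only [Finset.mem_filter, Finset.mem_range, Finset.mem_Ico, mem_iff_lt_colLen hD]
    omega
  have hcard : coLeg D (x, y) = y - colLen D x := by
    rw [coLeg, hset, Nat.card_Ico]
  rw [hcard]
  omega

lemma transA (hD : IsYoung D) (p q P Q : ℕ) (hrect : ∀ c ∈ D, c.1 < P ∧ c.2 < Q) :
    D.filter (fun c => p * (leg D c + 1) = q * arm D c)
      = ((Finset.range P) ×ˢ (Finset.range Q)).filter
          (fun c => c.2 < colLen D c.1 ∧ nlabel D p q P c.2 + (p + q) = wlabel D p q P c.1) := by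
  ext ⟨x, y⟩
  simp only [Finset.mem_filter, Finset.mem_product, Finset.mem_range]
  constructor
  · rintro ⟨hm, hcond⟩
    have hx := (hrect _ hm).1
    have hy := (hrect _ hm).2
    have hcol := (mem_iff_lt_colLen hD x y).mp hm
    refine ⟨⟨hx, hy⟩, hcol, ?_⟩
    have ha := arm_eq hD hm
    have hl := leg_eq hD hm
    have hcast : (p : ℤ) * ((leg D (x, y) : ℤ) + 1) = (q : ℤ) * (arm D (x, y) : ℤ) := by
      exact_mod_cast hcond
    rw [hl, ha] at hcast
    unfold nlabel wlabel
    linear_combination hcast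
  · rintro ⟨⟨hx, hy⟩, hcol, hlab⟩
    have hm : (x, y) ∈ D := (mem_iff_lt_colLen hD x y).mpr hcol
    refine ⟨hm, ?_⟩
    have ha := arm_eq hD hm
    have hl := leg_eq hD hm
    have : (p : ℤ) * ((leg D (x, y) : ℤ) + 1) = (q : ℤ) * (arm D (x, y) : ℤ) := by
      rw [hl, ha]
      unfold nlabel wlabel at hlab
      linear_combination hlab
    exact_mod_cast this

lemma transB (hD : IsYoung D) (p q P Q : ℕ) (hrect : ∀ c ∈ D, c.1 < P ∧ c.2 < Q) :
    ((Finset.range P) ×ˢ (Finset.range Q)).filter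
        (fun c => c ∉ D ∧ p * (coLeg D c + 1) = q * coArm D c)
      = ((Finset.range P) ×ˢ (Finset.range Q)).filter
          (fun c => ¬(c.2 < colLen D c.1) ∧ nlabel D p q P c.2 = wlabel D p q P c.1) := by
  ext ⟨x, y⟩
  simp only [Finset.mem_filter, Finset.mem_product, Finset.mem_range]
  constructor
  · rintro ⟨⟨hx, hy⟩, hm, hcond⟩
    have hcol : ¬ y < colLen D x := fun hc => hm ((mem_iff_lt_colLen hD x y).mpr hc)
    have hrow : rowLen D y ≤ x := by
      by_contra hc
      exact hm ((mem_iff_lt_rowLen hD x y).mpr (by omega))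
    refine ⟨⟨hx, hy⟩, hcol, ?_⟩
    have ha := coArm_eq hD hrow
    have hl := coLeg_eq hD (show colLen D x ≤ y by omega)
    have hcast : (p : ℤ) * ((coLeg D (x, y) : ℤ) + 1) = (q : ℤ) * (coArm D (x, y) : ℤ) := by
      exact_mod_cast hcond
    rw [hl, ha] at hcast
    unfold nlabel wlabel
    linear_combination -hcast
  · rintro ⟨⟨hx, hy⟩, hcol, hlab⟩
    have hm : (x, y) ∉ D := fun hc => hcol ((mem_iff_lt_colLen hD x y).mp hc)
    have hrow : rowLen D y ≤ x := by
      by_contra hc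
      exact hm ((mem_iff_lt_rowLen hD x y).mpr (by omega))
    refine ⟨⟨hx, hy⟩, hm, ?_⟩
    have ha := coArm_eq hD hrow
    have hl := coLeg_eq hD (show colLen D x ≤ y by omega)
    have hcg : (p : ℤ) * ((coLeg D (x, y) : ℤ) + 1) = (q : ℤ) * (coArm D (x, y) : ℤ) := by
      rw [hl, ha]
      unfold nlabel wlabel at hlab
      linear_combination -hlab
    exact_mod_cast hcg

end Trans
section MainHelpers

open Finset

lemma card_filter_prod (P Q : ℕ) (g : ℕ × ℕ → Prop) [DecidablePred g] :
    (((Finset.range P ×ˢ Finset.range Q).filter g).card : ℤ)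
      = ∑ x ∈ Finset.range P, ∑ y ∈ Finset.range Q, (if g (x, y) then (1 : ℤ) else 0) := by
  rw [Finset.card_filter, Finset.sum_product]
  push_cast [apply_ite (fun n : ℕ => (n : ℤ))]
  rfl

lemma cross_diff (P Q x0 y0 : ℕ) (hx0 : x0 < P) (hy0 : y0 < Q) (f g : ℕ → ℕ → ℤ)
    (hoff : ∀ x y, x ≠ x0 → y ≠ y0 → f x y = g x y)
    (hcorner : f x0 y0 = g x0 y0) :
    (∑ x ∈ Finset.range P, ∑ y ∈ Finset.range Q, f x y)
      - (∑ x ∈ Finset.range P, ∑ y ∈ Finset.range Q, g x y)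
      = (∑ y ∈ Finset.range Q, (f x0 y - g x0 y))
        + (∑ x ∈ Finset.range P, (f x y0 - g x y0)) := by
  have hmx : x0 ∈ Finset.range P := Finset.mem_range.mpr hx0
  have hmy : y0 ∈ Finset.range Q := Finset.mem_range.mpr hy0
  set F : ℕ → ℤ := fun x => ∑ y ∈ Finset.range Q, (f x y - g x y) with hF
  have hLHS : (∑ x ∈ Finset.range P, ∑ y ∈ Finset.range Q, f x y)
      - (∑ x ∈ Finset.range P, ∑ y ∈ Finset.range Q, g x y) = ∑ x ∈ Finset.range P, F x := by
    rw [← Finset.sum_sub_distrib]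
    apply Finset.sum_congr rfl
    intro x _
    show _ = ∑ y ∈ Finset.range Q, (f x y - g x y)
    rw [Finset.sum_sub_distrib]
  rw [hLHS]
  rw [← Finset.add_sum_erase _ F hmx]
  have hxe : ∀ x ∈ (Finset.range P).erase x0, F x = f x y0 - g x y0 := by
    intro x hx
    have hxne : x ≠ x0 := (Finset.mem_erase.mp hx).1
    rw [hF]
    apply Finset.sum_eq_single_of_mem y0 hmy
    intro b _ hb
    rw [hoff x b hxne hb]
    ring
  rw [Finset.sum_congr rfl hxe]
  have : ∑ x ∈ (Finset.range P).erase x0, (f x y0 - g x y0)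
      = (∑ x ∈ Finset.range P, (f x y0 - g x y0)) - (f x0 y0 - g x0 y0) := by
    rw [← Finset.add_sum_erase _ (fun x => f x y0 - g x y0) hmx]
    ring
  rw [this, hcorner]
  ring

lemma filter_range_restrict (Q y0 : ℕ) (hy : y0 ≤ Q) (c : ℕ → Prop) [DecidablePred c] :
    ((Finset.range Q).filter fun y => y < y0 ∧ c y) = (Finset.range y0).filter c := by
  ext t
  simp only [Finset.mem_filter, Finset.mem_range]
  constructor
  · rintro ⟨_, h1, h2⟩; exact ⟨h1, h2⟩
  · rintro ⟨h1, h2⟩; exact ⟨by omega, h1, h2⟩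

lemma sum_boole_int (s : Finset ℕ) (c : ℕ → Prop) [DecidablePred c] :
    (∑ y ∈ s, (if c y then (1 : ℤ) else 0)) = ((s.filter c).card : ℤ) := by
  rw [Finset.card_filter]
  push_cast [apply_ite (fun n : ℕ => (n : ℤ))]
  rfl

lemma young_empty : IsYoung (∅ : Finset (ℕ × ℕ)) := by
  intro x y x' y' h
  simp at h

end MainHelpers
section MainInd

open Finset

set_option maxHeartbeats 1000000 in
lemma mainInd (p q K : ℕ) (hp : 0 < p) (hq : 0 < q) (hK : 0 < K) (hpq : Nat.Coprime p q)
    (D : Finset (ℕ × ℕ)) :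
    IsYoung D → (∀ c ∈ D, q * c.1 + p * c.2 + p + q ≤ K * p * q) →
    ((((Finset.range (K * p)) ×ˢ (Finset.range (K * q))).filter
        fun c => ¬(c.2 < colLen D c.1) ∧ nlabel D p q (K * p) c.2 = wlabel D p q (K * p) c.1).card : ℤ)
      - ((((Finset.range (K * p)) ×ˢ (Finset.range (K * q))).filter
        fun c => c.2 < colLen D c.1 ∧ nlabel D p q (K * p) c.2 + (p + q) = wlabel D p q (K * p) c.1).card : ℤ)
      = (K : ℤ) - (Nin D p q (K * p) (K * q) 0 : ℤ) := by
  induction D using Finset.strongInduction with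
  | _ D ih =>
    intro hD hdiag
    rcases Finset.eq_empty_or_nonempty D with rfl | hne
    · -- base case
      have hA0 : (((Finset.range (K * p)) ×ˢ (Finset.range (K * q))).filter
          fun c => c.2 < colLen (∅ : Finset (ℕ × ℕ)) c.1
            ∧ nlabel ∅ p q (K * p) c.2 + (p + q) = wlabel ∅ p q (K * p) c.1) = ∅ := by
        rw [Finset.filter_eq_empty_iff]
        intro c _
        simp [colLen]
      have hNin : Nin (∅ : Finset (ℕ × ℕ)) p q (K * p) (K * q) 0 = 1 := by
        unfold Nin
        have hset : ((Finset.range (K * q)).filter fun y => nlabel ∅ p q (K * p) y = 0)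
            = {K * q - 1} := by
          ext t
          simp only [Finset.mem_filter, Finset.mem_range, Finset.mem_singleton, nlabel_empty]
          constructor
          · rintro ⟨ht, heq⟩
            have hc : ((t : ℤ) + 1) * p = ((K * q : ℕ) : ℤ) * p := by
              push_cast at heq ⊢
              linarith
            have hc2 : ((t : ℤ) + 1) = ((K * q : ℕ) : ℤ) :=
              mul_right_cancel₀ (show ((p : ℕ) : ℤ) ≠ 0 by exact_mod_cast hp.ne') hc
            omega
          · rintro rfl
            have hQpos : 0 < K * q := Nat.mul_pos hK hq
            refine ⟨by omega, ?_⟩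
            have hcst : ((K * q - 1 : ℕ) : ℤ) = ((K * q : ℕ) : ℤ) - 1 := by omega
            rw [hcst]
            push_cast
            ring
        rw [hset, Finset.card_singleton]
      have hB : (((Finset.range (K * p)) ×ˢ (Finset.range (K * q))).filter
          fun c => ¬(c.2 < colLen (∅ : Finset (ℕ × ℕ)) c.1)
            ∧ nlabel ∅ p q (K * p) c.2 = wlabel ∅ p q (K * p) c.1)
          = (Finset.range (K - 1)).image (fun k => ((k + 1) * p, (k + 1) * q - 1)) := by
        ext ⟨x, y⟩
        simp only [Finset.mem_filter, Finset.mem_product, Finset.mem_range, Finset.mem_image,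
          nlabel_empty, wlabel_empty]
        constructor
        · rintro ⟨⟨hx, hy⟩, _, heq⟩
          have hxy : (x : ℤ) * q = ((y : ℤ) + 1) * p := by
            push_cast at heq
            linarith
          have hnat : x * q = (y + 1) * p := by exact_mod_cast hxy
          have hdvd : p ∣ x := by
            apply hpq.dvd_of_dvd_mul_right
            exact ⟨y + 1, by rw [hnat, Nat.mul_comm]⟩
          obtain ⟨m, rfl⟩ := hdvd
          have hm1 : y + 1 = m * q := by
            have hc : p * (m * q) = p * (y + 1) := by
              calc p * (m * q) = p * m * q := by ring
              _ = (y + 1) * p := hnat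
              _ = p * (y + 1) := by ring
            exact (Nat.eq_of_mul_eq_mul_left hp hc).symm
          have hmpos : 1 ≤ m := by
            rcases Nat.eq_zero_or_pos m with rfl | h
            · simp at hm1
            · exact h
          have hmK : m < K := by
            by_contra hcon
            push_neg at hcon
            have : K * p ≤ m * p := Nat.mul_le_mul_right p hcon
            rw [Nat.mul_comm m p] at this
            omega
          refine ⟨m - 1, by omega, ?_⟩
          have hm' : m - 1 + 1 = m := by omega
          rw [hm']
          rw [Prod.mk.injEq]
          constructor
          · exact Nat.mul_comm m p
          · rw [← hm1]
            omega
        · rintro ⟨k, hk, heq⟩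
          have hx : (k + 1) * p = x := congrArg Prod.fst heq
          have hy : (k + 1) * q - 1 = y := congrArg Prod.snd heq
          have h1q : 1 ≤ (k + 1) * q := Nat.mul_pos (by omega) hq
          have hxb : x < K * p := by
            rw [← hx]
            have : k + 1 < K := by omega
            exact (Nat.mul_lt_mul_right hp).mpr this
          have hyb : y < K * q := by
            rw [← hy]
            have h2 : (k + 1) * q ≤ K * q := Nat.mul_le_mul_right q (by omega)
            omega
          refine ⟨⟨hxb, hyb⟩, by simp [colLen], ?_⟩
          rw [← hx, ← hy]
          have hc1 : (((k + 1) * q - 1 : ℕ) : ℤ) = ((k : ℤ) + 1) * q - 1 := by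
            have := h1q
            push_cast [Nat.cast_sub this]
            ring
          rw [hc1]
          push_cast
          ring
      rw [hA0, hB, hNin]
      rw [Finset.card_image_of_injective _ (fun a b hab => by
        have h1 := congrArg Prod.fst hab
        simp only at h1
        have := Nat.eq_of_mul_eq_mul_right hp h1
        omega)]
      simp only [Finset.card_empty, Finset.card_range]
      have : ((K - 1 : ℕ) : ℤ) = (K : ℤ) - 1 := by omega
      rw [this]
      push_cast
      ring
    · -- inductive step
      obtain ⟨x0, y0, h1, h2, h3⟩ := corner_exists hD hne
      set D₀ := D.erase (x0, y0) with hD₀def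
      have hssub : D₀ ⊂ D := Finset.erase_ssubset h1
      have hD₀y : IsYoung D₀ := corner_young_erase hD h1 h2 h3
      have hdiag₀ : ∀ c ∈ D₀, q * c.1 + p * c.2 + p + q ≤ K * p * q :=
        fun c hc => hdiag c (Finset.mem_of_mem_erase hc)
      have hIH := ih D₀ hssub hD₀y hdiag₀
      have hp' : (0 : ℤ) < p := by exact_mod_cast hp
      have hq' : (0 : ℤ) < q := by exact_mod_cast hq
      have hrectD : ∀ c ∈ D, c.1 < K * p ∧ c.2 < K * q := by
        intro c hc
        have hd := hdiag c hc
        constructor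
        · have h1' : q * (c.1 + 1) ≤ q * (K * p) := by
            calc q * (c.1 + 1) = q * c.1 + q := by ring
            _ ≤ K * p * q := by omega
            _ = q * (K * p) := by ring
          have := Nat.le_of_mul_le_mul_left h1' hq
          omega
        · have h2' : p * (c.2 + 1) ≤ p * (K * q) := by
            calc p * (c.2 + 1) = p * c.2 + p := by ring
            _ ≤ K * p * q := by omega
            _ = p * (K * q) := by ring
          have := Nat.le_of_mul_le_mul_left h2' hp
          omega
      have hx0P : x0 < K * p := (hrectD _ h1).1
      have hy0Q : y0 < K * q := (hrectD _ h1).2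
      obtain ⟨P'', hP2⟩ : ∃ n, K * p = n + (x0 + 1) := ⟨K * p - (x0 + 1), by omega⟩
      obtain ⟨Q₂, hQ2⟩ : ∃ m, K * q = m + (y0 + 1) := ⟨K * q - (y0 + 1), by omega⟩
      have hP2c : ((K * p : ℕ) : ℤ) = (P'' : ℤ) + x0 + 1 := by
        rw [hP2]; push_cast; ring
      have hQ2c : ((K * q : ℕ) : ℤ) = (Q₂ : ℤ) + y0 + 1 := by
        rw [hQ2]; push_cast; ring
      set u : ℤ := (((K * p : ℕ) : ℤ) - x0 - 1) * q - (y0 : ℤ) * p with hu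
      have hwD : wlabel D p q (K * p) x0 = u + q - p := by
        rw [wlabel, h2, hu]; push_cast; ring
      have hwD₀ : wlabel D₀ p q (K * p) x0 = u + q := by
        rw [wlabel, corner_colLen_erase_self hD h1 h2 h3, hu]; push_cast; ring
      have hnD : nlabel D p q (K * p) y0 = u - p := by
        rw [nlabel, corner_rowLen hD h1 h2 h3, hu]; push_cast; ring
      have hnD₀ : nlabel D₀ p q (K * p) y0 = u + q - p := by
        rw [nlabel, corner_rowLen_erase_self hD h1 h2 h3, hu]; push_cast; ring
      have hwne : ∀ x, x ≠ x0 → wlabel D₀ p q (K * p) x = wlabel D p q (K * p) x := fun x hx => by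
        rw [wlabel, wlabel, colLen_erase_ne hx]
      have hnne : ∀ y, y ≠ y0 → nlabel D₀ p q (K * p) y = nlabel D p q (K * p) y := fun y hy => by
        rw [nlabel, nlabel, rowLen_erase_ne hy]
      have hcolne : ∀ x, x ≠ x0 → colLen D₀ x = colLen D x := fun x hx => colLen_erase_ne hx
      have hF6 : ∀ x, y0 < colLen D x ↔ x ≤ x0 := by
        intro x
        constructor
        · intro h
          exact h3 _ ((mem_iff_lt_colLen hD x y0).mpr h)
        · intro h
          have := colLen_anti hD h
          omega
      have hum : 0 ≤ u - p := by
        have hd := hdiag _ h1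
        rw [hu]
        push_cast at hd ⊢
        linarith
      -- the suffix diagram
      set E : Finset (ℕ × ℕ) := (D.filter fun c => c.1 < x0 ∧ y0 < c.2).image
          (fun c => (c.1, c.2 - (y0 + 1))) with hEdef
      have hmemE : ∀ a b : ℕ, (a, b) ∈ E ↔ a < x0 ∧ (a, b + (y0 + 1)) ∈ D := by
        intro a b
        rw [hEdef]
        simp only [Finset.mem_image, Finset.mem_filter]
        constructor
        · rintro ⟨c, ⟨hcD, hc1, hc2⟩, hceq⟩
          rw [Prod.ext_iff] at hceq
          obtain ⟨he1, he2⟩ := hceq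
          simp only at he1 he2
          have hc2' : c.2 = b + (y0 + 1) := by omega
          refine ⟨by omega, ?_⟩
          rw [← he1, ← hc2']
          exact hcD
        · rintro ⟨ha, hm⟩
          refine ⟨(a, b + (y0 + 1)), ⟨hm, by omega, by omega⟩, ?_⟩
          rw [Prod.mk.injEq]
          exact ⟨rfl, by omega⟩
      have hEyoung : IsYoung E := by
        intro a b a' b' hm ha hb
        rw [hmemE] at hm ⊢
        exact ⟨by omega, hD a (b + (y0 + 1)) a' (b' + (y0 + 1)) hm.2 ha (by omega)⟩
      have hErect : ∀ c ∈ E, c.1 < x0 ∧ c.2 < Q₂ := by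
        intro c hc
        have hmm := (hmemE c.1 c.2).mp hc
        refine ⟨hmm.1, ?_⟩
        have := (hrectD _ hmm.2).2
        omega
      have hcolE : ∀ a, a < x0 → (colLen E a : ℤ) = (colLen D a : ℤ) - (y0 + 1) := by
        intro a ha
        have hya : y0 < colLen D a := (hF6 a).mpr (by omega)
        have hcl : colLen E a = colLen D a - (y0 + 1) := by
          apply colLen_eq_of_iff hEyoung
          intro b
          rw [hmemE, mem_iff_lt_colLen hD]
          omega
        rw [hcl]
        omega
      have hrowE : ∀ b, rowLen E b = rowLen D (b + (y0 + 1)) := by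
        intro b
        apply rowLen_eq_of_iff hEyoung
        intro a
        rw [hmemE, mem_iff_lt_rowLen hD]
        have hr := corner_rowLen_above hD h1 h2 h3 (show y0 < b + (y0 + 1) by omega)
        omega
      have hwlabelE : ∀ x, x < x0 → wlabel E p q x0 x = wlabel D p q (K * p) x - (u + q - p) := by
        intro x hx
        rw [wlabel, wlabel, hcolE x hx, hu]
        push_cast
        ring
      have hnlabelE : ∀ y, y0 < y →
          nlabel E p q x0 (y - (y0 + 1)) = nlabel D p q (K * p) y - (u + q - p) := by
        intro y hy
        rw [nlabel, nlabel, hrowE, hu]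
        have h1' : y - (y0 + 1) + (y0 + 1) = y := by omega
        rw [h1']
        have hc : ((y - (y0 + 1) : ℕ) : ℤ) = (y : ℤ) - (y0 + 1) := by omega
        rw [hc]
        push_cast
        ring
      -- bridges
      have hPN : ∀ w : ℤ, (((Finset.range y0).filter fun y => nlabel D p q (K * p) y = w).card)
          = Nin ∅ p q P'' y0 w := by
        intro w
        unfold Nin
        apply congrArg Finset.card
        apply Finset.filter_congr
        intro y hy
        have hyy : y ≤ y0 := by
          have := Finset.mem_range.mp hy
          omega
        show nlabel D p q (K * p) y = w ↔ nlabel ∅ p q P'' y = w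
        rw [nlabel, corner_rowLen_below hD h1 h2 h3 hyy, nlabel_empty]
        have hterm : ((K * p : ℕ) : ℤ) - ((x0 + 1 : ℕ) : ℤ) = (P'' : ℤ) := by
          rw [hP2c]; push_cast; ring
        rw [hterm]
      have hPW : ∀ w : ℤ, (((Finset.range (K * p)).filter
            fun x => x0 < x ∧ wlabel D p q (K * p) x = w).card) = Win ∅ p q P'' w := by
        intro w
        unfold Win
        apply Finset.card_bij' (fun x _ => x - (x0 + 1)) (fun k _ => k + (x0 + 1))
        · intro x hx
          simp only [Finset.mem_filter, Finset.mem_range] at hx ⊢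
          obtain ⟨hxP, hxx0, hlab⟩ := hx
          refine ⟨by omega, ?_⟩
          rw [wlabel_empty]
          rw [wlabel, corner_colLen_right hD h1 h2 h3 hxx0] at hlab
          have hc1 : ((x - (x0 + 1) : ℕ) : ℤ) = (x : ℤ) - x0 - 1 := by omega
          rw [hc1, show (P'' : ℤ) = ((K * p : ℕ) : ℤ) - x0 - 1 from by rw [hP2c]; ring]
          linear_combination hlab
        · intro k hk
          simp only [Finset.mem_filter, Finset.mem_range] at hk ⊢
          obtain ⟨hkP, hlab⟩ := hk
          refine ⟨by omega, by omega, ?_⟩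
          rw [wlabel_empty] at hlab
          rw [wlabel, corner_colLen_right hD h1 h2 h3 (by omega),
            show ((K * p : ℕ) : ℤ) = (P'' : ℤ) + x0 + 1 from hP2c]
          push_cast
          linear_combination hlab
        · intro x hx
          simp only [Finset.mem_filter, Finset.mem_range] at hx
          omega
        · intro k hk
          simp only [Finset.mem_filter, Finset.mem_range] at hk
          omega
      have hSW1 : (((Finset.range x0).filter
            fun x => wlabel D p q (K * p) x = u + q).card) = Win E p q x0 (p : ℤ) := by
        unfold Win
        apply congrArg Finset.card
        apply Finset.filter_congr
        intro x hx
        have hxx : x < x0 := Finset.mem_range.mp hx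
        show wlabel D p q (K * p) x = u + q ↔ wlabel E p q x0 x = (p : ℤ)
        rw [hwlabelE x hxx]
        constructor <;> intro hh <;> linarith
      have hSW2 : (((Finset.range x0).filter
            fun x => wlabel D p q (K * p) x = u + 2 * q).card) = Win E p q x0 ((p : ℤ) + q) := by
        unfold Win
        apply congrArg Finset.card
        apply Finset.filter_congr
        intro x hx
        have hxx : x < x0 := Finset.mem_range.mp hx
        show wlabel D p q (K * p) x = u + 2 * q ↔ wlabel E p q x0 x = (p : ℤ) + q
        rw [hwlabelE x hxx]
        constructor <;> intro hh <;> linarith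
      have hSN : ∀ w vE : ℤ, vE = w - (u + q - p) →
          (((Finset.range (K * q)).filter
            fun y => y0 < y ∧ nlabel D p q (K * p) y = w).card) = Nin E p q x0 Q₂ vE := by
        intro w vE hvE
        unfold Nin
        apply Finset.card_bij' (fun y _ => y - (y0 + 1)) (fun b _ => b + (y0 + 1))
        · intro y hy
          simp only [Finset.mem_filter, Finset.mem_range] at hy ⊢
          obtain ⟨hyQ, hy0y, hlab⟩ := hy
          refine ⟨by omega, ?_⟩
          rw [hnlabelE y hy0y, hlab, hvE]
        · intro b hb
          simp only [Finset.mem_filter, Finset.mem_range] at hb ⊢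
          obtain ⟨hbQ, hlab⟩ := hb
          refine ⟨by omega, by omega, ?_⟩
          have hcc := hnlabelE (b + (y0 + 1)) (by omega)
          have hbb : b + (y0 + 1) - (y0 + 1) = b := by omega
          rw [hbb] at hcc
          rw [hlab, hvE] at hcc
          linarith
        · intro y hy
          simp only [Finset.mem_filter, Finset.mem_range] at hy
          omega
        · intro b hb
          simp only [Finset.mem_filter, Finset.mem_range] at hb
          omega
      -- flow instances
      have flow1 := flow p q ∅ young_empty P'' y0 (by simp) (u - p)
      rw [show u - (p : ℤ) + q = u + q - p from by ring,
          show u - (p : ℤ) - p = u - 2 * p from by ring] at flow1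
      have hne1 : ¬(u - (p : ℤ) = (P'' : ℤ) * q - (y0 : ℤ) * p) := by
        intro hcon
        have he : (P'' : ℤ) * q - (y0 : ℤ) * p = u := by
          rw [hu, hP2c]; ring
        rw [he] at hcon
        linarith
      rw [if_neg hne1] at flow1
      have flow2 := flow p q E hEyoung x0 Q₂ hErect (p : ℤ)
      rw [show (p : ℤ) - p = 0 from by ring] at flow2
      rw [if_neg (show ¬((p : ℤ) = 0) from by linarith)] at flow2
      have hne3 : ¬((p : ℤ) = (x0 : ℤ) * q - (Q₂ : ℤ) * p) := by
        intro hcon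
        have hd := hdiag _ h1
        have hQc : (Q₂ : ℤ) = ((K * q : ℕ) : ℤ) - y0 - 1 := by rw [hQ2c]; ring
        rw [hQc] at hcon
        push_cast at hd hcon
        linarith
      rw [if_neg hne3] at flow2
      -- Nin update
      have hNin0 : (Nin D p q (K * p) (K * q) 0 : ℤ)
          = (Nin D₀ p q (K * p) (K * q) 0 : ℤ) + (if u - (p : ℤ) = 0 then 1 else 0) := by
        have key := filt_update (Finset.range (K * q)) y0
          (fun y => nlabel D p q (K * p) y = 0) (fun y => nlabel D₀ p q (K * p) y = 0)
          (Finset.mem_range.mpr hy0Q)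
          (fun y _ hy => by
            show nlabel D p q (K * p) y = 0 ↔ nlabel D₀ p q (K * p) y = 0
            rw [hnne y hy])
        have key2 := congrArg (fun n : ℕ => (n : ℤ)) key
        push_cast [apply_ite (fun n : ℕ => (n : ℤ))] at key2
        rw [hnD, hnD₀] at key2
        rw [if_neg (show ¬(u + (q : ℤ) - p = 0) from by intro hcon; linarith)] at key2
        unfold Nin
        linarith [key2]
      -- sums
      have hAsum : ((((Finset.range (K * p)) ×ˢ (Finset.range (K * q))).filter
          fun c => c.2 < colLen D c.1 ∧ nlabel D p q (K * p) c.2 + (p + q) = wlabel D p q (K * p) c.1).card : ℤ)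
          = ∑ x ∈ Finset.range (K * p), ∑ y ∈ Finset.range (K * q),
              (if (y < colLen D x ∧ nlabel D p q (K * p) y + (p + q) = wlabel D p q (K * p) x)
                then (1 : ℤ) else 0) :=
        card_filter_prod _ _ _
      have hA0sum : ((((Finset.range (K * p)) ×ˢ (Finset.range (K * q))).filter
          fun c => c.2 < colLen D₀ c.1 ∧ nlabel D₀ p q (K * p) c.2 + (p + q) = wlabel D₀ p q (K * p) c.1).card : ℤ)
          = ∑ x ∈ Finset.range (K * p), ∑ y ∈ Finset.range (K * q),
              (if (y < colLen D₀ x ∧ nlabel D₀ p q (K * p) y + (p + q) = wlabel D₀ p q (K * p) x)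
                then (1 : ℤ) else 0) :=
        card_filter_prod _ _ _
      have hBsum : ((((Finset.range (K * p)) ×ˢ (Finset.range (K * q))).filter
          fun c => ¬(c.2 < colLen D c.1) ∧ nlabel D p q (K * p) c.2 = wlabel D p q (K * p) c.1).card : ℤ)
          = ∑ x ∈ Finset.range (K * p), ∑ y ∈ Finset.range (K * q),
              (if (¬(y < colLen D x) ∧ nlabel D p q (K * p) y = wlabel D p q (K * p) x)
                then (1 : ℤ) else 0) :=
        card_filter_prod _ _ _
      have hB0sum : ((((Finset.range (K * p)) ×ˢ (Finset.range (K * q))).filter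
          fun c => ¬(c.2 < colLen D₀ c.1) ∧ nlabel D₀ p q (K * p) c.2 = wlabel D₀ p q (K * p) c.1).card : ℤ)
          = ∑ x ∈ Finset.range (K * p), ∑ y ∈ Finset.range (K * q),
              (if (¬(y < colLen D₀ x) ∧ nlabel D₀ p q (K * p) y = wlabel D₀ p q (K * p) x)
                then (1 : ℤ) else 0) :=
        card_filter_prod _ _ _
      -- cross differences, A
      have hdA : (∑ x ∈ Finset.range (K * p), ∑ y ∈ Finset.range (K * q),
              (if (y < colLen D x ∧ nlabel D p q (K * p) y + (p + q) = wlabel D p q (K * p) x)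
                then (1 : ℤ) else 0))
          - (∑ x ∈ Finset.range (K * p), ∑ y ∈ Finset.range (K * q),
              (if (y < colLen D₀ x ∧ nlabel D₀ p q (K * p) y + (p + q) = wlabel D₀ p q (K * p) x)
                then (1 : ℤ) else 0))
          = (∑ y ∈ Finset.range (K * q),
              ((if (y < colLen D x0 ∧ nlabel D p q (K * p) y + (p + q) = wlabel D p q (K * p) x0)
                then (1 : ℤ) else 0)
               - (if (y < colLen D₀ x0 ∧ nlabel D₀ p q (K * p) y + (p + q) = wlabel D₀ p q (K * p) x0)
                then (1 : ℤ) else 0)))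
            + (∑ x ∈ Finset.range (K * p),
              ((if (y0 < colLen D x ∧ nlabel D p q (K * p) y0 + (p + q) = wlabel D p q (K * p) x)
                then (1 : ℤ) else 0)
               - (if (y0 < colLen D₀ x ∧ nlabel D₀ p q (K * p) y0 + (p + q) = wlabel D₀ p q (K * p) x)
                then (1 : ℤ) else 0))) := by
        apply cross_diff (K * p) (K * q) x0 y0 hx0P hy0Q
        · intro x y hx hy
          rw [hcolne x hx, hnne y hy, hwne x hx]
        · rw [if_neg (show ¬(y0 < colLen D x0 ∧ nlabel D p q (K * p) y0 + ((p : ℤ) + q) = wlabel D p q (K * p) x0) from by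
              rintro ⟨_, hc⟩
              rw [hnD, hwD] at hc
              linarith),
            if_neg (show ¬(y0 < colLen D₀ x0 ∧ nlabel D₀ p q (K * p) y0 + ((p : ℤ) + q) = wlabel D₀ p q (K * p) x0) from by
              rintro ⟨hc, _⟩
              rw [corner_colLen_erase_self hD h1 h2 h3] at hc
              omega)]
      have hptA1 : ∀ y ∈ Finset.range (K * q),
          ((if (y < colLen D x0 ∧ nlabel D p q (K * p) y + (p + q) = wlabel D p q (K * p) x0)
            then (1 : ℤ) else 0)
           - (if (y < colLen D₀ x0 ∧ nlabel D₀ p q (K * p) y + (p + q) = wlabel D₀ p q (K * p) x0)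
            then (1 : ℤ) else 0))
          = (if (y < y0 ∧ nlabel D p q (K * p) y = u - 2 * p) then (1 : ℤ) else 0)
            - (if (y < y0 ∧ nlabel D p q (K * p) y = u - p) then (1 : ℤ) else 0) := by
        intro y _
        by_cases hyy : y = y0
        · rw [hyy]
          rw [if_neg (show ¬(y0 < colLen D x0 ∧ nlabel D p q (K * p) y0 + ((p : ℤ) + q) = wlabel D p q (K * p) x0) from by
                rintro ⟨_, hc⟩
                rw [hnD, hwD] at hc
                linarith),
              if_neg (show ¬(y0 < colLen D₀ x0 ∧ nlabel D₀ p q (K * p) y0 + ((p : ℤ) + q) = wlabel D₀ p q (K * p) x0) from by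
                rintro ⟨hc, _⟩
                rw [corner_colLen_erase_self hD h1 h2 h3] at hc
                omega),
              if_neg (show ¬(y0 < y0 ∧ nlabel D p q (K * p) y0 = u - 2 * p) from by
                rintro ⟨hc, _⟩; omega),
              if_neg (show ¬(y0 < y0 ∧ nlabel D p q (K * p) y0 = u - p) from by
                rintro ⟨hc, _⟩; omega)]
        · rw [hnne y hyy, h2, hwD, corner_colLen_erase_self hD h1 h2 h3, hwD₀]
          have i1 : (y < y0 + 1 ∧ nlabel D p q (K * p) y + ((p : ℤ) + q) = u + q - p)
              ↔ (y < y0 ∧ nlabel D p q (K * p) y = u - 2 * p) := by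
            constructor
            · rintro ⟨ha, hb⟩; exact ⟨by omega, by linarith⟩
            · rintro ⟨ha, hb⟩; exact ⟨by omega, by linarith⟩
          have i2 : (y < y0 ∧ nlabel D p q (K * p) y + ((p : ℤ) + q) = u + q)
              ↔ (y < y0 ∧ nlabel D p q (K * p) y = u - p) := by
            constructor
            · rintro ⟨ha, hb⟩; exact ⟨ha, by linarith⟩
            · rintro ⟨ha, hb⟩; exact ⟨ha, by linarith⟩
          rw [if_congr i1 rfl rfl, if_congr i2 rfl rfl]
      have hptA2 : ∀ x ∈ Finset.range (K * p),
          ((if (y0 < colLen D x ∧ nlabel D p q (K * p) y0 + (p + q) = wlabel D p q (K * p) x)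
            then (1 : ℤ) else 0)
           - (if (y0 < colLen D₀ x ∧ nlabel D₀ p q (K * p) y0 + (p + q) = wlabel D₀ p q (K * p) x)
            then (1 : ℤ) else 0))
          = (if (x < x0 ∧ wlabel D p q (K * p) x = u + q) then (1 : ℤ) else 0)
            - (if (x < x0 ∧ wlabel D p q (K * p) x = u + 2 * q) then (1 : ℤ) else 0) := by
        intro x _
        by_cases hxx : x = x0
        · rw [hxx]
          rw [if_neg (show ¬(y0 < colLen D x0 ∧ nlabel D p q (K * p) y0 + ((p : ℤ) + q) = wlabel D p q (K * p) x0) from by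
                rintro ⟨_, hc⟩
                rw [hnD, hwD] at hc
                linarith),
              if_neg (show ¬(y0 < colLen D₀ x0 ∧ nlabel D₀ p q (K * p) y0 + ((p : ℤ) + q) = wlabel D₀ p q (K * p) x0) from by
                rintro ⟨hc, _⟩
                rw [corner_colLen_erase_self hD h1 h2 h3] at hc
                omega),
              if_neg (show ¬(x0 < x0 ∧ wlabel D p q (K * p) x0 = u + q) from by
                rintro ⟨hc, _⟩; omega),
              if_neg (show ¬(x0 < x0 ∧ wlabel D p q (K * p) x0 = u + 2 * q) from by
                rintro ⟨hc, _⟩; omega)]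
        · rw [hcolne x hxx, hnD, hnD₀, hwne x hxx]
          have i1 : (y0 < colLen D x ∧ u - (p : ℤ) + ((p : ℤ) + q) = wlabel D p q (K * p) x)
              ↔ (x < x0 ∧ wlabel D p q (K * p) x = u + q) := by
            constructor
            · rintro ⟨ha, hb⟩
              have := (hF6 x).mp ha
              exact ⟨by omega, by linarith⟩
            · rintro ⟨ha, hb⟩
              exact ⟨(hF6 x).mpr (by omega), by linarith⟩
          have i2 : (y0 < colLen D x ∧ u + (q : ℤ) - p + ((p : ℤ) + q) = wlabel D p q (K * p) x)
              ↔ (x < x0 ∧ wlabel D p q (K * p) x = u + 2 * q) := by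
            constructor
            · rintro ⟨ha, hb⟩
              have := (hF6 x).mp ha
              exact ⟨by omega, by linarith⟩
            · rintro ⟨ha, hb⟩
              exact ⟨(hF6 x).mpr (by omega), by linarith⟩
          rw [if_congr i1 rfl rfl, if_congr i2 rfl rfl]
      have hT1A : (∑ y ∈ Finset.range (K * q),
          ((if (y < colLen D x0 ∧ nlabel D p q (K * p) y + (p + q) = wlabel D p q (K * p) x0)
            then (1 : ℤ) else 0)
           - (if (y < colLen D₀ x0 ∧ nlabel D₀ p q (K * p) y + (p + q) = wlabel D₀ p q (K * p) x0)
            then (1 : ℤ) else 0)))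
          = (Nin ∅ p q P'' y0 (u - 2 * p) : ℤ) - (Nin ∅ p q P'' y0 (u - p) : ℤ) := by
        rw [Finset.sum_congr rfl hptA1, Finset.sum_sub_distrib, sum_boole_int, sum_boole_int,
          filter_range_restrict (K * q) y0 (by omega) _,
          filter_range_restrict (K * q) y0 (by omega) _, hPN, hPN]
      have hT2A : (∑ x ∈ Finset.range (K * p),
          ((if (y0 < colLen D x ∧ nlabel D p q (K * p) y0 + (p + q) = wlabel D p q (K * p) x)
            then (1 : ℤ) else 0)
           - (if (y0 < colLen D₀ x ∧ nlabel D₀ p q (K * p) y0 + (p + q) = wlabel D₀ p q (K * p) x)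
            then (1 : ℤ) else 0)))
          = (Win E p q x0 (p : ℤ) : ℤ) - (Win E p q x0 ((p : ℤ) + q) : ℤ) := by
        rw [Finset.sum_congr rfl hptA2, Finset.sum_sub_distrib, sum_boole_int, sum_boole_int,
          filter_range_restrict (K * p) x0 (by omega) _,
          filter_range_restrict (K * p) x0 (by omega) _, hSW1, hSW2]
      -- cross differences, B
      have hdB : (∑ x ∈ Finset.range (K * p), ∑ y ∈ Finset.range (K * q),
              (if (¬(y < colLen D x) ∧ nlabel D p q (K * p) y = wlabel D p q (K * p) x)
                then (1 : ℤ) else 0))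
          - (∑ x ∈ Finset.range (K * p), ∑ y ∈ Finset.range (K * q),
              (if (¬(y < colLen D₀ x) ∧ nlabel D₀ p q (K * p) y = wlabel D₀ p q (K * p) x)
                then (1 : ℤ) else 0))
          = (∑ y ∈ Finset.range (K * q),
              ((if (¬(y < colLen D x0) ∧ nlabel D p q (K * p) y = wlabel D p q (K * p) x0)
                then (1 : ℤ) else 0)
               - (if (¬(y < colLen D₀ x0) ∧ nlabel D₀ p q (K * p) y = wlabel D₀ p q (K * p) x0)
                then (1 : ℤ) else 0)))
            + (∑ x ∈ Finset.range (K * p),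
              ((if (¬(y0 < colLen D x) ∧ nlabel D p q (K * p) y0 = wlabel D p q (K * p) x)
                then (1 : ℤ) else 0)
               - (if (¬(y0 < colLen D₀ x) ∧ nlabel D₀ p q (K * p) y0 = wlabel D₀ p q (K * p) x)
                then (1 : ℤ) else 0))) := by
        apply cross_diff (K * p) (K * q) x0 y0 hx0P hy0Q
        · intro x y hx hy
          rw [hcolne x hx, hnne y hy, hwne x hx]
        · rw [if_neg (show ¬(¬(y0 < colLen D x0) ∧ nlabel D p q (K * p) y0 = wlabel D p q (K * p) x0) from by
              rintro ⟨hc, _⟩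
              rw [h2] at hc
              omega),
            if_neg (show ¬(¬(y0 < colLen D₀ x0) ∧ nlabel D₀ p q (K * p) y0 = wlabel D₀ p q (K * p) x0) from by
              rintro ⟨_, hc⟩
              rw [hnD₀, hwD₀] at hc
              linarith)]
      have hptB1 : ∀ y ∈ Finset.range (K * q),
          ((if (¬(y < colLen D x0) ∧ nlabel D p q (K * p) y = wlabel D p q (K * p) x0)
            then (1 : ℤ) else 0)
           - (if (¬(y < colLen D₀ x0) ∧ nlabel D₀ p q (K * p) y = wlabel D₀ p q (K * p) x0)
            then (1 : ℤ) else 0))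
          = (if (y0 < y ∧ nlabel D p q (K * p) y = u + q - p) then (1 : ℤ) else 0)
            - (if (y0 < y ∧ nlabel D p q (K * p) y = u + q) then (1 : ℤ) else 0) := by
        intro y _
        by_cases hyy : y = y0
        · rw [hyy]
          rw [if_neg (show ¬(¬(y0 < colLen D x0) ∧ nlabel D p q (K * p) y0 = wlabel D p q (K * p) x0) from by
                rintro ⟨hc, _⟩
                rw [h2] at hc
                omega),
              if_neg (show ¬(¬(y0 < colLen D₀ x0) ∧ nlabel D₀ p q (K * p) y0 = wlabel D₀ p q (K * p) x0) from by
                rintro ⟨_, hc⟩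
                rw [hnD₀, hwD₀] at hc
                linarith),
              if_neg (show ¬(y0 < y0 ∧ nlabel D p q (K * p) y0 = u + q - p) from by
                rintro ⟨hc, _⟩; omega),
              if_neg (show ¬(y0 < y0 ∧ nlabel D p q (K * p) y0 = u + q) from by
                rintro ⟨hc, _⟩; omega)]
        · rw [hnne y hyy, h2, hwD, corner_colLen_erase_self hD h1 h2 h3, hwD₀]
          have i1 : (¬(y < y0 + 1) ∧ nlabel D p q (K * p) y = u + q - p)
              ↔ (y0 < y ∧ nlabel D p q (K * p) y = u + q - p) := by
            constructor
            · rintro ⟨ha, hb⟩; exact ⟨by omega, hb⟩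
            · rintro ⟨ha, hb⟩; exact ⟨by omega, hb⟩
          have i2 : (¬(y < y0) ∧ nlabel D p q (K * p) y = u + q)
              ↔ (y0 < y ∧ nlabel D p q (K * p) y = u + q) := by
            constructor
            · rintro ⟨ha, hb⟩; exact ⟨by omega, hb⟩
            · rintro ⟨ha, hb⟩; exact ⟨by omega, hb⟩
          rw [if_congr i1 rfl rfl, if_congr i2 rfl rfl]
      have hptB2 : ∀ x ∈ Finset.range (K * p),
          ((if (¬(y0 < colLen D x) ∧ nlabel D p q (K * p) y0 = wlabel D p q (K * p) x)
            then (1 : ℤ) else 0)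
           - (if (¬(y0 < colLen D₀ x) ∧ nlabel D₀ p q (K * p) y0 = wlabel D₀ p q (K * p) x)
            then (1 : ℤ) else 0))
          = (if (x0 < x ∧ wlabel D p q (K * p) x = u - p) then (1 : ℤ) else 0)
            - (if (x0 < x ∧ wlabel D p q (K * p) x = u + q - p) then (1 : ℤ) else 0) := by
        intro x _
        by_cases hxx : x = x0
        · rw [hxx]
          rw [if_neg (show ¬(¬(y0 < colLen D x0) ∧ nlabel D p q (K * p) y0 = wlabel D p q (K * p) x0) from by
                rintro ⟨hc, _⟩
                rw [h2] at hc
                omega),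
              if_neg (show ¬(¬(y0 < colLen D₀ x0) ∧ nlabel D₀ p q (K * p) y0 = wlabel D₀ p q (K * p) x0) from by
                rintro ⟨_, hc⟩
                rw [hnD₀, hwD₀] at hc
                linarith),
              if_neg (show ¬(x0 < x0 ∧ wlabel D p q (K * p) x0 = u - p) from by
                rintro ⟨hc, _⟩; omega),
              if_neg (show ¬(x0 < x0 ∧ wlabel D p q (K * p) x0 = u + q - p) from by
                rintro ⟨hc, _⟩; omega)]
        · rw [hcolne x hxx, hnD, hnD₀, hwne x hxx]
          have i1 : (¬(y0 < colLen D x) ∧ u - (p : ℤ) = wlabel D p q (K * p) x)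
              ↔ (x0 < x ∧ wlabel D p q (K * p) x = u - p) := by
            rw [hF6 x]
            constructor
            · rintro ⟨ha, hb⟩; exact ⟨by omega, hb.symm⟩
            · rintro ⟨ha, hb⟩; exact ⟨by omega, hb.symm⟩
          have i2 : (¬(y0 < colLen D x) ∧ u + (q : ℤ) - p = wlabel D p q (K * p) x)
              ↔ (x0 < x ∧ wlabel D p q (K * p) x = u + q - p) := by
            rw [hF6 x]
            constructor
            · rintro ⟨ha, hb⟩; exact ⟨by omega, hb.symm⟩
            · rintro ⟨ha, hb⟩; exact ⟨by omega, hb.symm⟩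
          rw [if_congr i1 rfl rfl, if_congr i2 rfl rfl]
      have hT1B : (∑ y ∈ Finset.range (K * q),
          ((if (¬(y < colLen D x0) ∧ nlabel D p q (K * p) y = wlabel D p q (K * p) x0)
            then (1 : ℤ) else 0)
           - (if (¬(y < colLen D₀ x0) ∧ nlabel D₀ p q (K * p) y = wlabel D₀ p q (K * p) x0)
            then (1 : ℤ) else 0)))
          = (Nin E p q x0 Q₂ 0 : ℤ) - (Nin E p q x0 Q₂ (p : ℤ) : ℤ) := by
        rw [Finset.sum_congr rfl hptB1, Finset.sum_sub_distrib, sum_boole_int, sum_boole_int,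
          hSN (u + q - p) 0 (by ring), hSN (u + q) (p : ℤ) (by ring)]
      have hT2B : (∑ x ∈ Finset.range (K * p),
          ((if (¬(y0 < colLen D x) ∧ nlabel D p q (K * p) y0 = wlabel D p q (K * p) x)
            then (1 : ℤ) else 0)
           - (if (¬(y0 < colLen D₀ x) ∧ nlabel D₀ p q (K * p) y0 = wlabel D₀ p q (K * p) x)
            then (1 : ℤ) else 0)))
          = (Win ∅ p q P'' (u - p) : ℤ) - (Win ∅ p q P'' (u + q - p) : ℤ) := by
        rw [Finset.sum_congr rfl hptB2, Finset.sum_sub_distrib, sum_boole_int, sum_boole_int,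
          hPW (u - p), hPW (u + q - p)]
      -- final assembly
      rw [hBsum, hAsum]
      rw [hB0sum, hA0sum] at hIH
      linarith [hdA, hdB, hT1A, hT2A, hT1B, hT2B, flow1, flow2, hNin0, hIH]


end MainInd

theorem cminus_formula (D : Finset (ℕ × ℕ)) (hD : IsYoung D)
    (p q K : ℕ) (hp : 0 < p) (hq : 0 < q) (hK : 0 < K) (hpq : Nat.Coprime p q)
    (hdiag : ∀ c ∈ D, q * c.1 + p * c.2 + p + q ≤ K * p * q) :
    ((D.filter fun c => p * (leg D c + 1) = q * arm D c).card : ℤ)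
      = ((((Finset.range (K * p)) ×ˢ (Finset.range (K * q))).filter
            fun c => c ∉ D ∧ p * (coLeg D c + 1) = q * coArm D c).card : ℤ)
        - ((K : ℤ) - (Nin D p q (K * p) (K * q) 0 : ℤ)) := by

  have hrect : ∀ c ∈ D, c.1 < K * p ∧ c.2 < K * q := by
    intro c hc
    have hd := hdiag c hc
    constructor
    · have h1' : q * (c.1 + 1) ≤ q * (K * p) := by
        calc q * (c.1 + 1) = q * c.1 + q := by ring
        _ ≤ K * p * q := by omega
        _ = q * (K * p) := by ring
      have := Nat.le_of_mul_le_mul_left h1' hq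
      omega
    · have h2' : p * (c.2 + 1) ≤ p * (K * q) := by
        calc p * (c.2 + 1) = p * c.2 + p := by ring
        _ ≤ K * p * q := by omega
        _ = p * (K * q) := by ring
      have := Nat.le_of_mul_le_mul_left h2' hp
      omega
  rw [transA hD p q (K * p) (K * q) hrect, transB hD p q (K * p) (K * q) hrect]
  have hmain := mainInd p q K hp hq hK hpq D hD hdiag
  linarith [hmain]
end

section
/- (Loehr–Warrington mid formula) Let D be a Young diagram fitting below the diagonal of R_{P,Q} (P = Kp, Q = Kq, p,q coprime positive, K positive). Then mid_{q/p}(D) := |{c \in D : p·l(c) < q·(a(c)+1) and q·a(c) < p·(l(c)+1)}| = |R^+_{P,Q}| - \sum_{v \leq w} |W_{in}(v)|·|N_{in}(w)|, where R^+_{P,Q} = {(x,y) \in (Z_{\geq 0})^2 : qx + py \leq Kpq - p - q}, the sum is over pairs of integer vertex labels v \leq w, W_{in}(v) is the set of westward boundary edges ending at a vertex labeled v, and N_{in}(w) the set of northward boundary edges ending at a vertex labeled w. -/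
/-!
Write `ℓ(a, b) = q a + p b`. A vertex label of the boundary path is `ℓ(P, 0) - ℓ`, so a west
edge (column `x`) and a north edge (row `y`) contribute to `∑_{v ≤ w}` exactly when `ℓ` at the
end of the north edge is at most `ℓ` at the end of the west edge, while for a cell `(x, y)` of
`D` the mid condition says that the difference of these two values lies strictly between `0`
and `p + q`. Hence `mid(D) + ∑_{v ≤ w} |W_in(v)| |N_in(w)|` counts the pairs `(x, y)` whose
difference is below `p + q` for cells of `D` and below `1` otherwise.

This count does not change when a corner cell `(x₀, y₀)` is removed: only row `y₀` and column
`x₀` are affected, and there the change is the signed number of crossings of the levels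
`ℓ = f₀ + q - 1` and `ℓ = f₀ - p` (with `f₀ = ℓ(x₀, y₀ + 1)`) by the parts of the path before
and after the corner, which telescopes to `0` because all the endpoints involved lie on the same
side of these levels. For the empty diagram, reflecting `x ↦ P - 1 - x` turns the count into
`|R⁺|`.
-/

open Finset

namespace LoehrWarrington

theorem sum_sum_eq_of_cross {α β M : Type*} [DecidableEq α] [AddCommMonoid M] {s : Finset α}
    {t : Finset β} {f : α → β → M} {a : α} {b : β} (ha : a ∈ s) (hb : b ∈ t)
    (hf : ∀ x ∈ s, ∀ y ∈ t, x ≠ a → y ≠ b → f x y = 0) :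
    ∑ x ∈ s, ∑ y ∈ t, f x y = ∑ y ∈ t, f a y + ∑ x ∈ s.erase a, f x b := by
  rw [← add_sum_erase s _ ha]
  congr 1
  exact sum_congr rfl fun x hx => sum_eq_single_of_mem b hb fun y hy hyb =>
    hf x (mem_of_mem_erase hx) y hy (ne_of_mem_erase hx) hyb

theorem sum_range_ite_lt {M : Type*} [AddCommMonoid M] (f g : ℕ → M) {m n : ℕ} (h : m ≤ n) :
    ∑ i ∈ range n, (if i < m then f i else g i) = ∑ i ∈ range m, f i + ∑ i ∈ Ico m n, g i := by
  rw [← sum_range_add_sum_Ico _ h]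
  congr 1 <;> refine sum_congr rfl fun i hi => ?_
  · rw [if_pos (mem_range.1 hi)]
  · rw [if_neg (not_lt.2 (mem_Ico.1 hi).1)]

theorem sum_comp_eq_sum_card_mul {ι κ R : Type*} [DecidableEq κ] [NonAssocSemiring R]
    (s : Finset ι) {t : Finset κ} {g : ι → κ} (h : ∀ i ∈ s, g i ∈ t) (f : κ → R) :
    ∑ i ∈ s, f (g i) = ∑ j ∈ t, (#{i ∈ s | g i = j} : R) * f j := by
  rw [← sum_fiberwise_of_maps_to' h]
  simp only [sum_const, nsmul_eq_mul]

section Young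

variable {D : Finset (ℕ × ℕ)}

/-- Mathlib indexes the cells of a `YoungDiagram` as (row, column), so its rows are the columns
of `D`. -/
def youngDiagramOf (hD : IsYoung D) : YoungDiagram :=
  ⟨D, fun _ _ hba ha => hD _ _ _ _ ha hba.1 hba.2⟩

theorem colLen_eq_rowLen (hD : IsYoung D) (x : ℕ) :
    colLen D x = (youngDiagramOf hD).rowLen x := by
  rw [YoungDiagram.rowLen_eq_card]; rfl

theorem rowLen_eq_colLen (hD : IsYoung D) (y : ℕ) :
    rowLen D y = (youngDiagramOf hD).colLen y := by
  rw [YoungDiagram.colLen_eq_card]; rfl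

theorem mem_iff_lt_colLen (hD : IsYoung D) {x y : ℕ} : (x, y) ∈ D ↔ y < colLen D x := by
  rw [colLen_eq_rowLen hD]; exact YoungDiagram.mem_iff_lt_rowLen (μ := youngDiagramOf hD)

theorem mem_iff_lt_rowLen (hD : IsYoung D) {x y : ℕ} : (x, y) ∈ D ↔ x < rowLen D y := by
  rw [rowLen_eq_colLen hD]; exact YoungDiagram.mem_iff_lt_colLen (μ := youngDiagramOf hD)

theorem colLen_anti (hD : IsYoung D) : Antitone (colLen D) := fun a b hab => by
  simpa only [colLen_eq_rowLen hD] using (youngDiagramOf hD).rowLen_anti a b hab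

theorem rowLen_eq_succ (hD : IsYoung D) {x y : ℕ} (h₁ : colLen D (x + 1) ≤ y)
    (h₂ : y < colLen D x) : rowLen D y = x + 1 := by
  have hx : x < rowLen D y := (mem_iff_lt_rowLen hD).1 ((mem_iff_lt_colLen hD).2 h₂)
  have hx' : ¬ x + 1 < rowLen D y := fun h =>
    ((mem_iff_lt_colLen hD).1 ((mem_iff_lt_rowLen hD).2 h)).not_ge h₁
  omega

theorem rowLen_eq_zero (hD : IsYoung D) {y : ℕ} (h : colLen D 0 ≤ y) : rowLen D y = 0 :=
  Nat.eq_zero_of_not_pos fun h₀ =>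
    ((mem_iff_lt_colLen hD).1 ((mem_iff_lt_rowLen hD).2 h₀)).not_ge h

theorem colLen_eq_of_corner (hD : IsYoung D) {x y : ℕ} (hmem : (x, y) ∈ D)
    (hu : (x, y + 1) ∉ D) : colLen D x = y + 1 := by
  rw [mem_iff_lt_colLen hD] at hmem hu; omega

theorem rowLen_eq_of_corner (hD : IsYoung D) {x y : ℕ} (hmem : (x, y) ∈ D)
    (hr : (x + 1, y) ∉ D) : rowLen D y = x + 1 := by
  rw [mem_iff_lt_rowLen hD] at hmem hr; omega

theorem arm_eq (hD : IsYoung D) (x y : ℕ) : arm D (x, y) = rowLen D y - (x + 1) := by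
  have : D.filter (fun d => d.2 = y ∧ x < d.1) = Ico (x + 1) (rowLen D y) ×ˢ {y} := by
    ext ⟨a, b⟩
    simp only [mem_filter, mem_product, mem_Ico, mem_singleton, mem_iff_lt_rowLen hD]
    constructor
    · rintro ⟨h, rfl, hxa⟩; exact ⟨⟨hxa, h⟩, rfl⟩
    · rintro ⟨⟨hxa, h⟩, rfl⟩; exact ⟨h, rfl, hxa⟩
  rw [arm, this, card_product, Nat.card_Ico, card_singleton, mul_one]

theorem leg_eq (hD : IsYoung D) (x y : ℕ) : leg D (x, y) = colLen D x - (y + 1) := by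
  have : D.filter (fun d => d.1 = x ∧ y < d.2) = {x} ×ˢ Ico (y + 1) (colLen D x) := by
    ext ⟨a, b⟩
    simp only [mem_filter, mem_product, mem_Ico, mem_singleton, mem_iff_lt_colLen hD]
    constructor
    · rintro ⟨h, rfl, hyb⟩; exact ⟨rfl, hyb, h⟩
    · rintro ⟨rfl, hyb, h⟩; exact ⟨h, rfl, hyb⟩
  rw [leg, this, card_product, Nat.card_Ico, card_singleton, one_mul]

theorem exists_corner (hne : D.Nonempty) :
    ∃ x y, (x, y) ∈ D ∧ (x + 1, y) ∉ D ∧ (x, y + 1) ∉ D := by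
  obtain ⟨c, hc, hmax⟩ := exists_max_image D (fun c => c.1 + c.2) hne
  exact ⟨c.1, c.2, hc, fun h => by have := hmax _ h; omega, fun h => by have := hmax _ h; omega⟩

theorem isYoung_erase_corner (hD : IsYoung D) {x y : ℕ} (hr : (x + 1, y) ∉ D)
    (hu : (x, y + 1) ∉ D) : IsYoung (D.erase (x, y)) := by
  intro a b a' b' hab ha hb
  rw [mem_erase] at hab ⊢
  refine ⟨fun h => ?_, hD a b a' b' hab.2 ha hb⟩
  obtain ⟨rfl, rfl⟩ := Prod.mk.inj h
  rcases Nat.lt_or_ge a' a with hlt | hge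
  · exact hr (hD a b _ _ hab.2 hlt hb)
  · have : b' < b := by
      by_contra! hle
      exact hab.1 (by rw [le_antisymm ha hge, le_antisymm hb hle])
    exact hu (hD a b _ _ hab.2 ha this)

theorem colLen_erase {c : ℕ × ℕ} (hc : c ∈ D) (x : ℕ) :
    (colLen (D.erase c) x : ℤ) = colLen D x - if x = c.1 then 1 else 0 := by
  rw [colLen, colLen, filter_erase]
  split_ifs with hx
  · rw [card_erase_of_mem (mem_filter.2 ⟨hc, hx.symm⟩), Nat.cast_sub]
    · simp
    · exact card_pos.2 ⟨c, mem_filter.2 ⟨hc, hx.symm⟩⟩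
  · rw [erase_eq_of_notMem fun h => hx (mem_filter.1 h).2.symm, sub_zero]

theorem rowLen_erase {c : ℕ × ℕ} (hc : c ∈ D) (y : ℕ) :
    (rowLen (D.erase c) y : ℤ) = rowLen D y - if y = c.2 then 1 else 0 := by
  rw [rowLen, rowLen, filter_erase]
  split_ifs with hy
  · rw [card_erase_of_mem (mem_filter.2 ⟨hc, hy.symm⟩), Nat.cast_sub]
    · simp
    · exact card_pos.2 ⟨c, mem_filter.2 ⟨hc, hy.symm⟩⟩
  · rw [erase_eq_of_notMem fun h => hy (mem_filter.1 h).2.symm, sub_zero]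

end Young

section Boundary

variable {D : Finset (ℕ × ℕ)} {M : Type*} [AddCommGroup M]

/-- The west edge of column `x` runs from `(x + 1, colLen D x)` to `(x, colLen D x)`, the north
edge of row `y` from `(rowLen D y, y)` to `(rowLen D y, y + 1)`; the boundary path from
`(b, colLen D b)` to `(0, Q)` consists of the west edges of the columns `x < b` and the north
edges of the rows `colLen D b ≤ y < Q`. -/
theorem sum_boundary_telescope (hD : IsYoung D) {Q : ℕ} (hQ : colLen D 0 ≤ Q)
    (φ : ℕ × ℕ → M) (b : ℕ) :
    ∑ x ∈ range b, (φ (x, colLen D x) - φ (x + 1, colLen D x))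
      + ∑ y ∈ Ico (colLen D b) Q, (φ (rowLen D y, y + 1) - φ (rowLen D y, y))
      = φ (0, Q) - φ (b, colLen D b) := by
  induction b with
  | zero =>
    rw [sum_range_zero, zero_add,
      sum_congr rfl fun y hy => by rw [rowLen_eq_zero hD (mem_Ico.1 hy).1]]
    exact sum_Ico_sub (fun y => φ (0, y)) hQ
  | succ b ih =>
    have hstrip : ∑ y ∈ Ico (colLen D (b + 1)) (colLen D b),
        (φ (rowLen D y, y + 1) - φ (rowLen D y, y))
          = φ (b + 1, colLen D b) - φ (b + 1, colLen D (b + 1)) := by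
      rw [sum_congr rfl fun y hy =>
        by rw [rowLen_eq_succ hD (mem_Ico.1 hy).1 (mem_Ico.1 hy).2]]
      exact sum_Ico_sub (fun y => φ (b + 1, y)) (colLen_anti hD b.le_succ)
    rw [sum_range_succ, ← sum_Ico_consecutive _ (colLen_anti hD b.le_succ)
      ((colLen_anti hD b.zero_le).trans hQ), hstrip]
    rw [← sub_eq_zero, ← sub_eq_zero.2 ih]
    abel

end Boundary

section Levels

variable (D : Finset (ℕ × ℕ)) (p q : ℕ)

/-- The values of `ℓ(a, b) = q a + p b` at the endpoints `(x, colLen D x)` of the west edge of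
column `x` and `(rowLen D y, y + 1)` of the north edge of row `y`; the labels of the paper are
`ℓ(P, 0) - ℓ`. -/
def wlevel (x : ℕ) : ℤ := q * x + p * colLen D x

def nlevel (y : ℕ) : ℤ := q * rowLen D y + p * (y + 1)

theorem wlabel_eq (P x : ℕ) : wlabel D p q P x = q * P - wlevel D p q x := by
  rw [wlabel, wlevel]; ring

theorem nlabel_eq (P y : ℕ) : nlabel D p q P y = q * P - nlevel D p q y := by
  rw [nlabel, nlevel]; ring

def aboveLevel (τ : ℤ) (c : ℕ × ℕ) : ℤ := if τ < q * c.1 + p * c.2 then 1 else 0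

def westCross (τ : ℤ) (x : ℕ) : ℤ :=
  aboveLevel p q τ (x, colLen D x) - aboveLevel p q τ (x + 1, colLen D x)

def northCross (τ : ℤ) (y : ℕ) : ℤ :=
  aboveLevel p q τ (rowLen D y, y + 1) - aboveLevel p q τ (rowLen D y, y)

variable {D p q}

theorem westCross_eq (τ : ℤ) (x : ℕ) : westCross D p q τ x =
    (if τ < wlevel D p q x then 1 else 0) - if τ < wlevel D p q x + q then 1 else 0 := by
  simp only [westCross, aboveLevel, wlevel]; push_cast
  rw [show (q : ℤ) * (x + 1) + p * colLen D x = q * x + p * colLen D x + q by ring]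
  rfl

theorem northCross_eq (τ : ℤ) (y : ℕ) : northCross D p q τ y =
    (if τ < nlevel D p q y then 1 else 0) - if τ < nlevel D p q y - p then 1 else 0 := by
  simp only [northCross, aboveLevel, nlevel]; push_cast
  rw [show (q : ℤ) * rowLen D y + p * y = q * rowLen D y + p * (y + 1) - p by ring]
  rfl

theorem sum_westCross_add_sum_northCross (hD : IsYoung D) {Q : ℕ} (hQ : colLen D 0 ≤ Q)
    (τ : ℤ) (b : ℕ) :
    ∑ x ∈ range b, westCross D p q τ x + ∑ y ∈ Ico (colLen D b) Q, northCross D p q τ y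
      = aboveLevel p q τ (0, Q) - aboveLevel p q τ (b, colLen D b) :=
  sum_boundary_telescope hD hQ (aboveLevel p q τ) b

theorem wlevel_erase {c : ℕ × ℕ} (hc : c ∈ D) (x : ℕ) :
    wlevel (D.erase c) p q x = wlevel D p q x - if x = c.1 then (p : ℤ) else 0 := by
  rw [wlevel, wlevel, colLen_erase hc]; split_ifs <;> ring

theorem nlevel_erase {c : ℕ × ℕ} (hc : c ∈ D) (y : ℕ) :
    nlevel (D.erase c) p q y = nlevel D p q y - if y = c.2 then (q : ℤ) else 0 := by
  rw [nlevel, nlevel, rowLen_erase hc]; split_ifs <;> ring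

end Levels

section PairCount

variable (D : Finset (ℕ × ℕ)) (p q : ℕ)

def pairTerm (x y : ℕ) : ℤ :=
  if nlevel D p q y - wlevel D p q x < if (x, y) ∈ D then (p + q : ℤ) else 1 then 1 else 0

def pairCount (P Q : ℕ) : ℤ := ∑ x ∈ range P, ∑ y ∈ range Q, pairTerm D p q x y

variable {D p q} {x₀ y₀ : ℕ}

theorem pairTerm_erase_of_ne (hmem : (x₀, y₀) ∈ D) {x y : ℕ} (hx : x ≠ x₀) (hy : y ≠ y₀) :
    pairTerm (D.erase (x₀, y₀)) p q x y = pairTerm D p q x y := by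
  simp [pairTerm, wlevel_erase hmem, nlevel_erase hmem, hx, hy]

theorem pairTerm_sub_erase_col (hD : IsYoung D) (hp : 0 < p) (hmem : (x₀, y₀) ∈ D)
    (hr : (x₀ + 1, y₀) ∉ D) (hu : (x₀, y₀ + 1) ∉ D) (y : ℕ) :
    pairTerm D p q x₀ y - pairTerm (D.erase (x₀, y₀)) p q x₀ y
      = if y < y₀ + 1 then northCross D p q (wlevel D p q x₀ + q - 1) y
        else northCross D p q (wlevel D p q x₀ - p) y := by
  have hcol := colLen_eq_of_corner hD hmem hu
  rw [northCross_eq, northCross_eq]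
  by_cases hy : y = y₀
  · subst hy
    have hG : nlevel D p q y = wlevel D p q x₀ + q := by
      rw [nlevel, wlevel, rowLen_eq_of_corner hD hmem hr, hcol]; push_cast; ring
    simp only [pairTerm, wlevel_erase hmem, nlevel_erase hmem, hG, hmem, mem_erase, ne_eq,
      not_true_eq_false, false_and, if_true, if_false]
    split_ifs <;> omega
  · simp only [pairTerm, wlevel_erase hmem, nlevel_erase hmem, if_neg hy, if_true, mem_erase,
      mem_iff_lt_colLen hD, hcol, ne_eq, Prod.mk.injEq, true_and, sub_zero]
    split_ifs <;> omega

theorem pairTerm_sub_erase_row (hD : IsYoung D) (hq : 0 < q) (hmem : (x₀, y₀) ∈ D)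
    (hr : (x₀ + 1, y₀) ∉ D) (hu : (x₀, y₀ + 1) ∉ D) {x : ℕ} (hx : x ≠ x₀) :
    pairTerm D p q x y₀ - pairTerm (D.erase (x₀, y₀)) p q x y₀
      = if x < x₀ then westCross D p q (wlevel D p q x₀ - p) x
        else westCross D p q (wlevel D p q x₀ + q - 1) x := by
  have hG : nlevel D p q y₀ = wlevel D p q x₀ + q := by
    rw [nlevel, wlevel, rowLen_eq_of_corner hD hmem hr, colLen_eq_of_corner hD hmem hu]
    push_cast; ring
  rw [westCross_eq, westCross_eq]
  simp only [pairTerm, wlevel_erase hmem, nlevel_erase hmem, if_true, mem_erase,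
    mem_iff_lt_rowLen hD, rowLen_eq_of_corner hD hmem hr, ne_eq, Prod.mk.injEq, hx, false_and,
    not_false_eq_true, true_and, hG, if_false, sub_zero]
  split_ifs <;> omega

end PairCount

section Triangle

variable {D : Finset (ℕ × ℕ)} {p q P Q : ℕ}

theorem lt_and_lt_of_mem (hp : 0 < p) (hq : 0 < q) (hPQ : q * P = p * Q)
    (hdiag : ∀ c ∈ D, q * c.1 + p * c.2 + p + q ≤ q * P) {c : ℕ × ℕ} (hc : c ∈ D) :
    c.1 < P ∧ c.2 < Q := by
  have := hdiag c hc
  exact ⟨Nat.lt_of_mul_lt_mul_left (a := q) (by nlinarith),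
    Nat.lt_of_mul_lt_mul_left (a := p) (by nlinarith)⟩

theorem colLen_eq_zero (h : ∀ c ∈ D, c.1 < P) : colLen D P = 0 :=
  card_eq_zero.2 <| filter_eq_empty_iff.2 fun c hc => (h c hc).ne

theorem colLen_zero_le (hD : IsYoung D) (h : ∀ c ∈ D, c.2 < Q) : colLen D 0 ≤ Q :=
  not_lt.1 fun hQ => (h _ ((mem_iff_lt_colLen hD).2 hQ)).false

theorem pairCount_erase_corner (hD : IsYoung D) (hp : 0 < p) (hq : 0 < q)
    (hPQ : q * P = p * Q) (hdiag : ∀ c ∈ D, q * c.1 + p * c.2 + p + q ≤ q * P) {x₀ y₀ : ℕ}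
    (hmem : (x₀, y₀) ∈ D) (hr : (x₀ + 1, y₀) ∉ D) (hu : (x₀, y₀ + 1) ∉ D) :
    pairCount (D.erase (x₀, y₀)) p q P Q = pairCount D p q P Q := by
  have hfit := fun c hc => lt_and_lt_of_mem hp hq hPQ hdiag (c := c) hc
  obtain ⟨hx₀, hy₀⟩ := hfit _ hmem
  have hQ := colLen_zero_le hD fun c hc => (hfit c hc).2
  have hcol := colLen_eq_of_corner hD hmem hu
  have hf₀ : wlevel D p q x₀ = q * x₀ + p * (y₀ + 1) := by rw [wlevel, hcol]; push_cast; ring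
  set f₀ := wlevel D p q x₀
  have hdiag₀ : (q * x₀ + p * y₀ + p + q : ℤ) ≤ q * P := by exact_mod_cast hdiag _ hmem
  have hPQ' : (q * P : ℤ) = p * Q := by exact_mod_cast hPQ
  have hp' : (0 : ℤ) < p := by exact_mod_cast hp
  have hq' : (0 : ℤ) < q := by exact_mod_cast hq
  -- Telescoping along the path up to and from its vertex `(x₀, y₀ + 1)`, where `ℓ = f₀`.
  have hbefore : ∑ x ∈ Ico x₀ P, westCross D p q (f₀ + q - 1) x
      + ∑ y ∈ range (y₀ + 1), northCross D p q (f₀ + q - 1) y = -1 := by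
    have hP := sum_westCross_add_sum_northCross (p := p) (q := q) hD hQ (f₀ + q - 1) P
    have h₀ := sum_westCross_add_sum_northCross (p := p) (q := q) hD hQ (f₀ + q - 1) x₀
    rw [colLen_eq_zero fun c hc => (hfit c hc).1, ← range_eq_Ico,
      ← sum_range_add_sum_Ico _ hx₀.le, ← sum_range_add_sum_Ico _ hy₀] at hP
    rw [hcol] at h₀
    have hcorner : aboveLevel p q (f₀ + q - 1) (x₀, y₀ + 1) = 0 :=
      if_neg (by push_cast; linarith)
    have hstart : aboveLevel p q (f₀ + q - 1) (P, 0) = 1 := if_pos (by push_cast; linarith)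
    linarith
  have hafter : ∑ x ∈ range x₀, westCross D p q (f₀ - p) x
      + ∑ y ∈ Ico (y₀ + 1) Q, northCross D p q (f₀ - p) y = 0 := by
    have h₀ := sum_westCross_add_sum_northCross (p := p) (q := q) hD hQ (f₀ - p) x₀
    rw [hcol] at h₀
    have hcorner : aboveLevel p q (f₀ - p) (x₀, y₀ + 1) = 1 := if_pos (by push_cast; linarith)
    have hend : aboveLevel p q (f₀ - p) (0, Q) = 1 := if_pos (by push_cast; linarith)
    linarith
  have hwest : westCross D p q (f₀ + q - 1) x₀ = -1 := by
    rw [westCross_eq, if_neg (by linarith), if_pos (by linarith)]; rfl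
  refine (sub_eq_zero.1 ?_).symm
  calc pairCount D p q P Q - pairCount (D.erase (x₀, y₀)) p q P Q
      = ∑ x ∈ range P, ∑ y ∈ range Q,
          (pairTerm D p q x y - pairTerm (D.erase (x₀, y₀)) p q x y) := by
        simp only [pairCount, ← sum_sub_distrib]
    _ = ∑ y ∈ range Q, (pairTerm D p q x₀ y - pairTerm (D.erase (x₀, y₀)) p q x₀ y)
          + ∑ x ∈ (range P).erase x₀,
            (pairTerm D p q x y₀ - pairTerm (D.erase (x₀, y₀)) p q x y₀) :=
        sum_sum_eq_of_cross (mem_range.2 hx₀) (mem_range.2 hy₀) fun x _ y _ hx hy => by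
          rw [pairTerm_erase_of_ne hmem hx hy, sub_self]
    _ = (∑ y ∈ range (y₀ + 1), northCross D p q (f₀ + q - 1) y
          + ∑ y ∈ Ico (y₀ + 1) Q, northCross D p q (f₀ - p) y)
        + (∑ x ∈ range x₀, westCross D p q (f₀ - p) x
          + ∑ x ∈ Ico x₀ P, westCross D p q (f₀ + q - 1) x
          - westCross D p q (f₀ + q - 1) x₀) := by
        rw [sum_congr rfl fun y _ => pairTerm_sub_erase_col hD hp hmem hr hu y,
          sum_range_ite_lt _ _ hy₀,
          sum_congr rfl fun x hx => pairTerm_sub_erase_row hD hq hmem hr hu (ne_of_mem_erase hx),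
          sum_erase_eq_sub (mem_range.2 hx₀), sum_range_ite_lt _ _ hx₀.le, if_neg (lt_irrefl x₀)]
    _ = 0 := by linarith

theorem pairCount_eq_pairCount_empty (hD : IsYoung D) (hp : 0 < p) (hq : 0 < q)
    (hPQ : q * P = p * Q) (hdiag : ∀ c ∈ D, q * c.1 + p * c.2 + p + q ≤ q * P) :
    pairCount D p q P Q = pairCount ∅ p q P Q := by
  induction hn : #D generalizing D with
  | zero => rw [card_eq_zero.1 hn]
  | succ n ih =>
    obtain ⟨x₀, y₀, hmem, hr, hu⟩ := exists_corner (D := D) (card_pos.1 (by omega))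
    rw [← pairCount_erase_corner hD hp hq hPQ hdiag hmem hr hu]
    exact ih (isYoung_erase_corner hD hr hu) (fun c hc => hdiag c (mem_of_mem_erase hc))
      (by rw [card_erase_of_mem hmem, hn]; rfl)

end Triangle

section Evaluation

variable {D : Finset (ℕ × ℕ)} {p q : ℕ}

theorem pairTerm_eq_add (hp : 0 < p) (x y : ℕ) : pairTerm D p q x y
    = (if nlevel D p q y ≤ wlevel D p q x then 1 else 0)
      + if (x, y) ∈ D ∧ wlevel D p q x < nlevel D p q y
          ∧ nlevel D p q y < wlevel D p q x + p + q then 1 else 0 := by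
  by_cases hc : (x, y) ∈ D <;> simp only [pairTerm, hc, true_and, false_and, if_true, if_false]
  <;> split_ifs <;> omega

theorem pairCount_eq_add (hp : 0 < p) (P Q : ℕ) : pairCount D p q P Q
    = ∑ x ∈ range P, ∑ y ∈ range Q, (if nlevel D p q y ≤ wlevel D p q x then 1 else 0)
      + ∑ x ∈ range P, ∑ y ∈ range Q, if (x, y) ∈ D ∧ wlevel D p q x < nlevel D p q y
          ∧ nlevel D p q y < wlevel D p q x + p + q then 1 else 0 := by
  simp only [pairCount, pairTerm_eq_add hp, sum_add_distrib]

theorem pairCount_empty (P Q : ℕ) :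
    pairCount ∅ p q P Q = #{c ∈ range P ×ˢ range Q | q * c.1 + p * c.2 + p + q ≤ q * P} := by
  rw [card_filter, sum_product, pairCount, ← sum_range_reflect]
  push_cast
  refine sum_congr rfl fun x hx => sum_congr rfl fun y _ => ?_
  have hx := mem_range.1 hx
  simp only [pairTerm, wlevel, nlevel, colLen, rowLen, filter_empty, card_empty, notMem_empty,
    if_false, Nat.cast_zero, mul_zero, add_zero]
  rw [Nat.sub_sub, Nat.cast_sub (by omega)]
  push_cast
  congr 1
  exact propext ⟨fun h => by zify; linarith, fun h => by zify at h; linarith⟩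

theorem nlevel_sub_wlevel (hD : IsYoung D) {x y : ℕ} (hc : (x, y) ∈ D) :
    nlevel D p q y - wlevel D p q x = q * (arm D (x, y) + 1) - p * leg D (x, y) := by
  have hrow : rowLen D y = x + 1 + arm D (x, y) := by
    have := (mem_iff_lt_rowLen hD).1 hc; rw [arm_eq hD]; omega
  have hcol : colLen D x = y + 1 + leg D (x, y) := by
    have := (mem_iff_lt_colLen hD).1 hc; rw [leg_eq hD]; omega
  rw [nlevel, wlevel, hrow, hcol]; push_cast; ring

theorem card_mid_eq (hD : IsYoung D) {P Q : ℕ} (hfit : ∀ c ∈ D, c.1 < P ∧ c.2 < Q) :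
    (#{c ∈ D | p * leg D c < q * (arm D c + 1) ∧ q * arm D c < p * (leg D c + 1)} : ℤ)
      = ∑ x ∈ range P, ∑ y ∈ range Q, if (x, y) ∈ D ∧ wlevel D p q x < nlevel D p q y
          ∧ nlevel D p q y < wlevel D p q x + p + q then 1 else 0 := by
  have : {c ∈ D | p * leg D c < q * (arm D c + 1) ∧ q * arm D c < p * (leg D c + 1)}
      = {c ∈ range P ×ˢ range Q | c ∈ D ∧ wlevel D p q c.1 < nlevel D p q c.2
          ∧ nlevel D p q c.2 < wlevel D p q c.1 + p + q} := by
    ext ⟨x, y⟩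
    simp only [mem_filter, mem_product, mem_range]
    constructor
    · rintro ⟨hc, h₁, h₂⟩
      have := nlevel_sub_wlevel (p := p) (q := q) hD hc
      exact ⟨hfit _ hc, hc, by zify at h₁; linarith, by zify at h₂; linarith⟩
    · rintro ⟨-, hc, h₁, h₂⟩
      have := nlevel_sub_wlevel (p := p) (q := q) hD hc
      exact ⟨hc, by zify; linarith, by zify; linarith⟩
  rw [this, card_filter, sum_product]
  push_cast
  rfl

theorem sum_labels_eq (P Q : ℕ) :
    ∑ v ∈ labels D p q P Q, ∑ w ∈ labels D p q P Q,
        (if v ≤ w then (Win D p q P v : ℤ) * (Nin D p q P Q w : ℤ) else 0)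
      = ∑ x ∈ range P, ∑ y ∈ range Q, if nlevel D p q y ≤ wlevel D p q x then 1 else 0 := by
  set L := labels D p q P Q
  have hW : ∀ x ∈ range P, wlabel D p q P x ∈ L :=
    fun x hx => mem_union_left _ (mem_image_of_mem _ hx)
  have hN : ∀ y ∈ range Q, nlabel D p q P y ∈ L :=
    fun y hy => mem_union_right _ (mem_image_of_mem _ hy)
  calc _ = ∑ v ∈ L, (Win D p q P v : ℤ) * ∑ w ∈ L, (Nin D p q P Q w : ℤ) *
          if v ≤ w then 1 else 0 := by
        simp only [mul_sum]
        exact sum_congr rfl fun v _ => sum_congr rfl fun w _ => by split_ifs <;> ring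
    _ = ∑ x ∈ range P, ∑ w ∈ L, (Nin D p q P Q w : ℤ) * if wlabel D p q P x ≤ w then 1 else 0 :=
        (sum_comp_eq_sum_card_mul _ hW _).symm
    _ = ∑ x ∈ range P, ∑ y ∈ range Q, if wlabel D p q P x ≤ nlabel D p q P y then 1 else 0 :=
        sum_congr rfl fun x _ => (sum_comp_eq_sum_card_mul _ hN _).symm
    _ = _ := by simp only [wlabel_eq, nlabel_eq, sub_le_sub_iff_left]

end Evaluation

end LoehrWarrington

theorem LW_mid_formula_general (D : Finset (ℕ × ℕ)) (hD : IsYoung D)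
    (p q K : ℕ) (hp : 0 < p) (hq : 0 < q)
    (hdiag : ∀ c ∈ D, q * c.1 + p * c.2 + p + q ≤ K * p * q) :
    ((D.filter fun c =>
        p * leg D c < q * (arm D c + 1) ∧ q * arm D c < p * (leg D c + 1)).card : ℤ)
      = ((((Finset.range (K * p)) ×ˢ (Finset.range (K * q))).filter
            fun c => q * c.1 + p * c.2 + p + q ≤ K * p * q).card : ℤ)
        - ∑ v ∈ labels D p q (K * p) (K * q), ∑ w ∈ labels D p q (K * p) (K * q),
            (if v ≤ w then (Win D p q (K * p) v : ℤ) * (Nin D p q (K * p) (K * q) w : ℤ)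
             else 0) := by
  have hKpq : K * p * q = q * (K * p) := by ring
  have hPQ : q * (K * p) = p * (K * q) := by ring
  rw [hKpq] at hdiag ⊢
  have hfit := fun c hc => LoehrWarrington.lt_and_lt_of_mem hp hq hPQ hdiag (c := c) hc
  rw [LoehrWarrington.card_mid_eq hD hfit, LoehrWarrington.sum_labels_eq,
    ← LoehrWarrington.pairCount_empty,
    ← LoehrWarrington.pairCount_eq_pairCount_empty hD hp hq hPQ hdiag,
    LoehrWarrington.pairCount_eq_add hp]
  ring

theorem LW_mid_formula (D : Finset (ℕ × ℕ)) (hD : IsYoung D)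
    (p q K : ℕ) (hp : 0 < p) (hq : 0 < q) (hK : 0 < K) (hpq : Nat.Coprime p q)
    (hdiag : ∀ c ∈ D, q * c.1 + p * c.2 + p + q ≤ K * p * q) :
    ((D.filter fun c =>
        p * leg D c < q * (arm D c + 1) ∧ q * arm D c < p * (leg D c + 1)).card : ℤ)
      = ((((Finset.range (K * p)) ×ˢ (Finset.range (K * q))).filter
            fun c => q * c.1 + p * c.2 + p + q ≤ K * p * q).card : ℤ)
        - ∑ v ∈ labels D p q (K * p) (K * q), ∑ w ∈ labels D p q (K * p) (K * q),
            (if v ≤ w then (Win D p q (K * p) v : ℤ) * (Nin D p q (K * p) (K * q) w : ℤ)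
             else 0) :=
  LW_mid_formula_general D hD p q K hp hq hdiag
end

section
/- Let D be a Young diagram fitting below the diagonal of R_{P,Q} (P = Kp, Q = Kq, p,q coprime positive, K positive). The number of boxes (x,y) \in R_{P,Q} \ D with qx + py = Kpq - p - q equals K - |N_{in}(0)|, and the number of boxes (x,y) \in D with qx + py = Kpq - p - q equals |N_{in}(0)| - 1, where N_{in}(0) is the set of northward boundary-path edges entering a vertex labeled 0. -/
lemma aux_downclosed_range (S : Finset ℕ) (h : ∀ a ∈ S, ∀ b ≤ a, b ∈ S) :
    S = Finset.range S.card := by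
  have hsub : S ⊆ Finset.range S.card := by
    intro a ha
    rw [Finset.mem_range]
    by_contra hc
    push_neg at hc
    have hsub2 : Finset.range (a + 1) ⊆ S := by
      intro b hb
      exact h a ha b (Nat.lt_succ_iff.mp (Finset.mem_range.mp hb))
    have := Finset.card_le_card hsub2
    simp [Finset.card_range] at this
    omega
  exact Finset.eq_of_subset_of_card_le hsub (by simp)

lemma aux_mem_iff_lt_rowLen (D : Finset (ℕ × ℕ)) (hD : IsYoung D) (x y : ℕ) :
    (x, y) ∈ D ↔ x < rowLen D y := by
  classical
  set R := D.filter (fun c => c.2 = y) with hR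
  have hinj : Set.InjOn Prod.fst (R : Set (ℕ × ℕ)) := by
    intro a ha b hb hab
    simp only [hR, Finset.coe_filter, Set.mem_setOf_eq] at ha hb
    exact Prod.ext hab (ha.2.trans hb.2.symm)
  set S := R.image Prod.fst with hS
  have hcard : S.card = rowLen D y := Finset.card_image_of_injOn hinj
  have hdc : ∀ a ∈ S, ∀ b ≤ a, b ∈ S := by
    intro a ha b hb
    simp only [hS, Finset.mem_image] at ha ⊢
    obtain ⟨⟨cx, cy⟩, hc, rfl⟩ := ha
    simp only [hR, Finset.mem_filter] at hc
    refine ⟨(b, y), ?_, rfl⟩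
    simp only [hR, Finset.mem_filter]
    exact ⟨hD cx cy b y hc.1 hb (le_of_eq hc.2.symm), trivial⟩
  have hSr : S = Finset.range (rowLen D y) := by
    rw [← hcard]; exact aux_downclosed_range S hdc
  constructor
  · intro hx
    have hxS : x ∈ S := Finset.mem_image.mpr ⟨(x, y), by simp [hR, hx], rfl⟩
    rwa [hSr, Finset.mem_range] at hxS
  · intro hx
    have hxS : x ∈ S := by rw [hSr, Finset.mem_range]; exact hx
    obtain ⟨⟨cx, cy⟩, hc, rfl⟩ := Finset.mem_image.mp hxS
    simp only [hR, Finset.mem_filter] at hc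
    obtain ⟨hcD, rfl⟩ := hc
    exact hcD

theorem diagonal_boxes_count (D : Finset (ℕ × ℕ)) (hD : IsYoung D)
    (p q K : ℕ) (hp : 0 < p) (hq : 0 < q) (hK : 0 < K) (hpq : Nat.Coprime p q)
    (hdiag : ∀ c ∈ D, q * c.1 + p * c.2 + p + q ≤ K * p * q) :
    ((((Finset.range (K * p)) ×ˢ (Finset.range (K * q))).filter
        fun c => c ∉ D ∧ q * c.1 + p * c.2 + p + q = K * p * q).card : ℤ)
      = (K : ℤ) - (Nin D p q (K * p) (K * q) 0 : ℤ) ∧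
    (((D.filter fun c => q * c.1 + p * c.2 + p + q = K * p * q).card : ℤ))
      = (Nin D p q (K * p) (K * q) 0 : ℤ) - 1 := by
  classical
  have hmem : ∀ x y : ℕ, (x, y) ∈ D ↔ x < rowLen D y := aux_mem_iff_lt_rowLen D hD
  -- f indexes the diagonal boxes
  set f : ℕ → ℕ × ℕ := fun j => (j * p - 1, (K - j) * q - 1) with hf
  have hpos : ∀ a b : ℕ, 0 < a → 0 < b → (a * b - 1) + 1 = a * b := fun a b ha hb =>
    Nat.succ_pred_eq_of_pos (Nat.mul_pos ha hb)
  -- forward line characterization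
  have hlineF : ∀ x y : ℕ, q * x + p * y + p + q = K * p * q →
      ∃ j, 0 < j ∧ j < K ∧ x + 1 = j * p ∧ y + 1 = (K - j) * q := by
    intro x y hxy
    have h1 : q * (x + 1) + p * (y + 1) = K * p * q := by
      have e : q * (x + 1) + p * (y + 1) = q * x + p * y + p + q := by ring
      rw [e, hxy]
    have hd0 : p ∣ p * (y + 1) + q * (x + 1) := by
      rw [Nat.add_comm, h1]; exact Dvd.intro (K * q) (by ring)
    have hd : p ∣ q * (x + 1) := (Nat.dvd_add_right (Dvd.intro (y + 1) rfl)).mp hd0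
    have hdx : p ∣ (x + 1) := hpq.dvd_of_dvd_mul_left hd
    obtain ⟨j, hj⟩ := hdx
    have hj1 : 0 < j := by
      rcases Nat.eq_zero_or_pos j with h | h
      · rw [h, Nat.mul_zero] at hj; omega
      · exact h
    have h2 : q * j + (y + 1) = K * q := by
      apply Nat.eq_of_mul_eq_mul_left hp
      calc p * (q * j + (y + 1)) = q * (p * j) + p * (y + 1) := by ring
        _ = q * (x + 1) + p * (y + 1) := by rw [← hj]
        _ = K * p * q := h1
        _ = p * (K * q) := by ring
    have hjK : j < K := by
      have h3 : q * j < K * q := lt_of_lt_of_le (Nat.lt_add_of_pos_right (Nat.succ_pos y)) h2.le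
      have h4 : q * j < q * K := by rw [mul_comm K q] at h3; exact h3
      exact Nat.lt_of_mul_lt_mul_left h4
    have hyj : y + 1 = (K - j) * q := by
      have h4 : K * q - q * j = y + 1 := Nat.sub_eq_of_eq_add (by linarith)
      rw [Nat.sub_mul, mul_comm j q]
      exact h4.symm
    exact ⟨j, hj1, hjK, by rw [hj, mul_comm], hyj⟩
  -- backward line characterization
  have hlineB : ∀ j, 0 < j → j < K →
      q * (f j).1 + p * (f j).2 + p + q = K * p * q := by
    intro j hj1 hjK
    have hx1 : (f j).1 + 1 = j * p := hpos j p hj1 hp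
    have hy1 : (f j).2 + 1 = (K - j) * q := hpos (K - j) q (by omega) hq
    set m := K - j with hmdef
    have hm : m + j = K := by omega
    have h1 : q * ((f j).1 + 1) + p * ((f j).2 + 1) = K * p * q := by
      rw [hx1, hy1, ← hm]; ring
    have e : q * ((f j).1 + 1) + p * ((f j).2 + 1)
        = q * (f j).1 + p * (f j).2 + p + q := by ring
    rw [e] at h1
    exact h1
  -- bounds for f j
  have hfb : ∀ j, 0 < j → j < K → (f j).1 < K * p ∧ (f j).2 < K * q := by
    intro j hj1 hjK
    constructor
    · calc (f j).1 < (f j).1 + 1 := Nat.lt_succ_self _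
        _ = j * p := hpos j p hj1 hp
        _ ≤ K * p := Nat.mul_le_mul_right p hjK.le
    · calc (f j).2 < (f j).2 + 1 := Nat.lt_succ_self _
        _ = (K - j) * q := hpos (K - j) q (by omega) hq
        _ ≤ K * q := Nat.mul_le_mul_right q (by omega)
  -- rowLen bound on the diagonal rows
  have hrow_le : ∀ j, j < K → rowLen D ((K - j) * q - 1) ≤ j * p := by
    intro j hjK
    by_contra hc
    push_neg at hc
    have hmemD : (j * p, (K - j) * q - 1) ∈ D := (hmem _ _).mpr hc
    have hb := hdiag _ hmemD
    simp only at hb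
    have hy1 : ((K - j) * q - 1) + 1 = (K - j) * q := hpos (K - j) q (by omega) hq
    set m := K - j with hmdef
    have hm : m + j = K := by omega
    have hKpq : K * p * q = q * (j * p) + p * (m * q) := by rw [← hm]; ring
    have hyv : p * (m * q) = p * (((K - j) * q - 1) + 1) := by rw [hy1]
    have : p * (m * q) = p * ((K - j) * q - 1) + p := by rw [hyv]; ring
    linarith
  -- rowLen globally bounded by K*p
  have hrow_le' : ∀ y : ℕ, rowLen D y ≤ K * p := by
    intro y
    by_contra hc
    push_neg at hc
    have hmemD : (K * p, y) ∈ D := (hmem _ _).mpr hc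
    have hb := hdiag _ hmemD
    simp only at hb
    have : q * (K * p) = K * p * q := by ring
    linarith [Nat.zero_le (p * y)]
  -- row (K*q - 1) is empty
  have hrow0 : rowLen D (K * q - 1) = 0 := by
    by_contra hc
    have hmemD : (0, K * q - 1) ∈ D := (hmem _ _).mpr (by omega)
    have hb := hdiag _ hmemD
    simp only at hb
    have hy1 : (K * q - 1) + 1 = K * q := hpos K q hK hq
    have h5 : p * (K * q) = K * p * q := by ring
    have h6 : p * (K * q) = p * (K * q - 1) + p := by
      conv_lhs => rw [← hy1]
      ring
    linarith
  -- characterize rows with nlabel = 0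
  have hNchar : ∀ y, y < K * q → (nlabel D p q (K * p) y = 0 ↔
      ∃ j, j < K ∧ y = (K - j) * q - 1 ∧ rowLen D y = j * p) := by
    intro y hy
    constructor
    · intro h0
      unfold nlabel at h0
      push_cast at h0
      set r := rowLen D y with hr
      have hrle : r ≤ K * p := hrow_le' y
      have hint : ((K * p - r : ℕ) : ℤ) * q = ((y : ℤ) + 1) * p := by
        push_cast [Nat.cast_sub hrle]
        linarith
      have hnat : (K * p - r) * q = (y + 1) * p := by exact_mod_cast hint
      have hd : p ∣ q * (K * p - r) := by
        rw [mul_comm q _, hnat]; exact dvd_mul_left p (y + 1)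
      have hdm : p ∣ (K * p - r) := hpq.dvd_of_dvd_mul_left hd
      obtain ⟨m, hmv⟩ := hdm
      have hym : y + 1 = m * q := by
        apply Nat.eq_of_mul_eq_mul_left hp
        calc p * (y + 1) = (y + 1) * p := by ring
          _ = (K * p - r) * q := hnat.symm
          _ = (p * m) * q := by rw [hmv]
          _ = p * (m * q) := by ring
      have hm1 : 0 < m := by
        rcases Nat.eq_zero_or_pos m with h | h
        · rw [h, Nat.zero_mul] at hym; omega
        · exact h
      have hmK : m ≤ K := by
        have h7 : p * m ≤ p * K := by
          rw [← hmv]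
          calc K * p - r ≤ K * p := Nat.sub_le _ _
            _ = p * K := by ring
        exact Nat.le_of_mul_le_mul_left h7 hp
      refine ⟨K - m, by omega, ?_, ?_⟩
      · have : K - (K - m) = m := by omega
        rw [this]
        omega
      · have h8 : (K - m) * p = K * p - m * p := Nat.sub_mul K m p
        have h9 : m * p = p * m := mul_comm m p
        rw [h8, h9, ← hmv]
        omega
    · rintro ⟨j, hjK, rfl, hrl⟩
      unfold nlabel
      rw [hrl]
      have hy1 : ((K - j) * q - 1) + 1 = (K - j) * q := hpos (K - j) q (by omega) hq
      set m := K - j with hmdef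
      have hm : m + j = K := by omega
      have hycast : ((m * q - 1 : ℕ) : ℤ) + 1 = (m : ℤ) * q := by
        have : ((m * q - 1) + 1 : ℕ) = ((m : ℕ) * q) := hy1
        exact_mod_cast congrArg (Nat.cast : ℕ → ℤ) this
      have hKc : (K : ℤ) = (m : ℤ) + (j : ℤ) := by exact_mod_cast hm.symm
      push_cast
      rw [hycast]
      linear_combination (q : ℤ) * (p : ℤ) * hKc
  -- index sets
  set Tin := (Finset.Ico 1 K).filter (fun j => f j ∈ D) with hTin
  set Tout := (Finset.Ico 1 K).filter (fun j => f j ∉ D) with hTout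
  set Jset := (Finset.range K).filter (fun j => rowLen D ((K - j) * q - 1) = j * p) with hJset
  -- condition equivalence for 1 ≤ j < K
  have hcond : ∀ j, 0 < j → j < K →
      (rowLen D ((K - j) * q - 1) = j * p ↔ f j ∈ D) := by
    intro j hj1 hjK
    have hx1 : (j * p - 1) + 1 = j * p := hpos j p hj1 hp
    constructor
    · intro hr
      show (j * p - 1, (K - j) * q - 1) ∈ D
      rw [hmem, hr]
      omega
    · intro hmemf
      have := (hmem _ _).mp hmemf
      have h10 : j * p ≤ rowLen D ((K - j) * q - 1) := by omega
      exact le_antisymm (hrow_le j hjK) h10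
  have hJeq : Jset = insert 0 Tin := by
    ext j
    simp only [hJset, hTin, Finset.mem_filter, Finset.mem_range, Finset.mem_insert,
      Finset.mem_Ico]
    constructor
    · rintro ⟨hjK, hr⟩
      rcases Nat.eq_zero_or_pos j with h | h
      · exact Or.inl h
      · exact Or.inr ⟨⟨h, hjK⟩, (hcond j h hjK).mp hr⟩
    · rintro (rfl | ⟨⟨hj1, hjK⟩, hmemf⟩)
      · refine ⟨hK, ?_⟩
        simp only [Nat.sub_zero, Nat.zero_mul]
        exact hrow0
      · exact ⟨hjK, (hcond j hj1 hjK).mpr hmemf⟩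
  -- Nin = Jset.card
  have hginj : Set.InjOn (fun j => (K - j) * q - 1) Jset := by
    intro a ha b hb hab
    simp only [hJset, Finset.coe_filter, Set.mem_setOf_eq, Finset.mem_range] at ha hb
    simp only at hab
    have ha1 : ((K - a) * q - 1) + 1 = (K - a) * q := hpos (K - a) q (by omega) hq
    have hb1 : ((K - b) * q - 1) + 1 = (K - b) * q := hpos (K - b) q (by omega) hq
    have h11 : (K - a) * q = (K - b) * q := by omega
    have h12 : K - a = K - b := Nat.eq_of_mul_eq_mul_right hq h11
    omega
  have hNS : (Finset.range (K * q)).filter (fun y => nlabel D p q (K * p) y = 0)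
      = Jset.image (fun j => (K - j) * q - 1) := by
    ext y
    simp only [Finset.mem_filter, Finset.mem_range, Finset.mem_image, hJset]
    constructor
    · rintro ⟨hy, h0⟩
      obtain ⟨j, hjK, rfl, hrl⟩ := (hNchar y hy).mp h0
      exact ⟨j, ⟨hjK, hrl⟩, rfl⟩
    · rintro ⟨j, ⟨hjK, hrl⟩, rfl⟩
      have hy1 : ((K - j) * q - 1) + 1 = (K - j) * q := hpos (K - j) q (by omega) hq
      have hyb : (K - j) * q - 1 < K * q := by
        have : (K - j) * q ≤ K * q := Nat.mul_le_mul_right q (by omega)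
        omega
      exact ⟨hyb, (hNchar _ hyb).mpr ⟨j, hjK, rfl, hrl⟩⟩
  have hNin : Nin D p q (K * p) (K * q) 0 = Tin.card + 1 := by
    unfold Nin
    rw [hNS, Finset.card_image_of_injOn hginj, hJeq,
      Finset.card_insert_of_notMem (by simp [hTin])]
  -- f injective on Ico 1 K
  have hfinj : ∀ s : Finset ℕ, (∀ j ∈ s, 0 < j ∧ j < K) → Set.InjOn f s := by
    intro s hs a ha b hb hab
    have haK := hs a (by exact_mod_cast ha)
    have hbK := hs b (by exact_mod_cast hb)
    have ha1 : (a * p - 1) + 1 = a * p := hpos a p haK.1 hp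
    have hb1 : (b * p - 1) + 1 = b * p := hpos b p hbK.1 hp
    have h13 : a * p - 1 = b * p - 1 := congrArg Prod.fst hab
    have h14 : a * p = b * p := by omega
    exact Nat.eq_of_mul_eq_mul_right hp h14
  -- D-side diagonal set
  have hDline : D.filter (fun c => q * c.1 + p * c.2 + p + q = K * p * q)
      = Tin.image f := by
    ext c
    simp only [Finset.mem_filter, Finset.mem_image, hTin, Finset.mem_Ico]
    constructor
    · rintro ⟨hcD, hcl⟩
      obtain ⟨j, hj1, hjK, hx, hy⟩ := hlineF c.1 c.2 hcl
      have hc : f j = c := by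
        have e1 : c.1 = j * p - 1 := by omega
        have e2 : c.2 = (K - j) * q - 1 := by omega
        simp only [hf]
        exact Prod.ext e1.symm e2.symm
      exact ⟨j, ⟨⟨hj1, hjK⟩, hc ▸ hcD⟩, hc⟩
    · rintro ⟨j, ⟨⟨hj1, hjK⟩, hjD⟩, rfl⟩
      exact ⟨hjD, hlineB j hj1 hjK⟩
  -- complement-side diagonal set
  have hCline : ((Finset.range (K * p)) ×ˢ (Finset.range (K * q))).filter
      (fun c => c ∉ D ∧ q * c.1 + p * c.2 + p + q = K * p * q) = Tout.image f := by
    ext c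
    simp only [Finset.mem_filter, Finset.mem_image, hTout, Finset.mem_product,
      Finset.mem_range, Finset.mem_Ico]
    constructor
    · rintro ⟨_, hcD, hcl⟩
      obtain ⟨j, hj1, hjK, hx, hy⟩ := hlineF c.1 c.2 hcl
      have hc : f j = c := by
        have e1 : c.1 = j * p - 1 := by omega
        have e2 : c.2 = (K - j) * q - 1 := by omega
        simp only [hf]
        exact Prod.ext e1.symm e2.symm
      exact ⟨j, ⟨⟨hj1, hjK⟩, hc ▸ hcD⟩, hc⟩
    · rintro ⟨j, ⟨⟨hj1, hjK⟩, hjD⟩, rfl⟩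
      exact ⟨hfb j hj1 hjK, hjD, hlineB j hj1 hjK⟩
  have hc1 : (D.filter (fun c => q * c.1 + p * c.2 + p + q = K * p * q)).card
      = Tin.card := by
    rw [hDline]
    exact Finset.card_image_of_injOn (hfinj Tin (fun j hj => by
      simp only [hTin, Finset.mem_filter, Finset.mem_Ico] at hj; exact hj.1))
  have hc2 : (((Finset.range (K * p)) ×ˢ (Finset.range (K * q))).filter
      (fun c => c ∉ D ∧ q * c.1 + p * c.2 + p + q = K * p * q)).card = Tout.card := by
    rw [hCline]
    exact Finset.card_image_of_injOn (hfinj Tout (fun j hj => by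
      simp only [hTout, Finset.mem_filter, Finset.mem_Ico] at hj; exact hj.1))
  have hsum : Tin.card + Tout.card = K - 1 := by
    rw [hTin, hTout]
    rw [Finset.card_filter_add_card_filter_not (fun j => f j ∈ D)]
    simp [Nat.card_Ico]
  constructor
  · rw [hc2, hNin]; push_cast; omega
  · rw [hc1, hNin]; push_cast; omega
end

section
/- For coprime positive integers p, q, the number of lattice points (x,y) with x, y \geq 0 and qx + py = Kpq - p - q equals K - 1, for any positive integer K. -/
theorem lattice_points_on_diagonal (p q K : ℕ) (hp : 0 < p) (hq : 0 < q)
    (hK : 0 < K) (hpq : Nat.Coprime p q) :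
    {c : ℕ × ℕ | q * c.1 + p * c.2 + p + q = K * p * q}.ncard = K - 1 := by
  have hset : {c : ℕ × ℕ | q * c.1 + p * c.2 + p + q = K * p * q} =
      ↑((Finset.Ico 1 K).image (fun a => (p * a - 1, q * (K - a) - 1))) := by
    ext ⟨x, y⟩
    simp only [Set.mem_setOf_eq, Finset.coe_image, Set.mem_image, Finset.mem_coe,
      Finset.mem_Ico]
    constructor
    · intro h
      have h1 : q * (x + 1) + p * (y + 1) = K * p * q := by
        have e1 : q * (x + 1) = q * x + q := by ring
        have e2 : p * (y + 1) = p * y + p := by ring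
        rw [e1, e2]; linarith
      have hdx : p ∣ x + 1 := by
        refine hpq.dvd_of_dvd_mul_left ?_
        have e : q * (x + 1) = K * p * q - p * (y + 1) := Nat.eq_sub_of_add_eq h1
        rw [e]
        exact Nat.dvd_sub ⟨K * q, by ring⟩ (dvd_mul_right p (y + 1))
      have hdy : q ∣ y + 1 := by
        refine hpq.symm.dvd_of_dvd_mul_left ?_
        have e : p * (y + 1) = K * p * q - q * (x + 1) := by omega
        rw [e]
        exact Nat.dvd_sub ⟨K * p, by ring⟩ (dvd_mul_right q (x + 1))
      obtain ⟨a, ha⟩ := hdx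
      obtain ⟨b, hb⟩ := hdy
      have hab : a + b = K := by
        have h2 : p * q * (a + b) = p * q * K := by
          rw [ha, hb] at h1
          calc p * q * (a + b) = q * (p * a) + p * (q * b) := by ring
            _ = K * p * q := h1
            _ = p * q * K := by ring
        exact Nat.eq_of_mul_eq_mul_left (Nat.mul_pos hp hq) h2
      have ha1 : 1 ≤ a := by
        rcases Nat.eq_zero_or_pos a with h0 | h0
        · rw [h0, Nat.mul_zero] at ha; omega
        · exact h0
      have hb1 : 1 ≤ b := by
        rcases Nat.eq_zero_or_pos b with h0 | h0
        · rw [h0, Nat.mul_zero] at hb; omega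
        · exact h0
      refine ⟨a, ⟨ha1, by omega⟩, ?_⟩
      have hKa : K - a = b := by omega
      rw [hKa]
      have hx : p * a - 1 = x := by rw [← ha, Nat.add_sub_cancel]
      have hy : q * b - 1 = y := by rw [← hb, Nat.add_sub_cancel]
      rw [hx, hy]
    · rintro ⟨a, ⟨ha1, ha2⟩, heq⟩
      cases heq
      have hu1 : 1 ≤ p * a := Nat.mul_pos hp (by omega)
      have hv1 : 1 ≤ q * (K - a) := Nat.mul_pos hq (by omega)
      obtain ⟨u, hu⟩ := Nat.exists_eq_add_of_le hu1
      obtain ⟨v, hv⟩ := Nat.exists_eq_add_of_le hv1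
      have key : q * (p * a) + p * (q * (K - a)) = K * p * q := by
        have hs : a + (K - a) = K := by omega
        calc q * (p * a) + p * (q * (K - a)) = p * q * (a + (K - a)) := by ring
          _ = p * q * K := by rw [hs]
          _ = K * p * q := by ring
      rw [hu, hv] at key ⊢
      simp only [Nat.add_sub_cancel_left]
      have e : q * (1 + u) + p * (1 + v) = q + q * u + (p + p * v) := by ring
      rw [e] at key
      linarith
  rw [hset, Set.ncard_coe_finset]
  rw [Finset.card_image_of_injOn, Nat.card_Ico]
  intro a ha a' ha' h
  simp only [Finset.coe_Ico, Set.mem_Ico] at ha ha'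
  have h1 : p * a - 1 = p * a' - 1 := congrArg Prod.fst h
  have hpa : 1 ≤ p * a := Nat.mul_pos hp (by omega)
  have hpa' : 1 ≤ p * a' := Nat.mul_pos hp (by omega)
  have e : p * a - 1 + 1 = p * a' - 1 + 1 := by rw [h1]
  rw [Nat.sub_add_cancel hpa, Nat.sub_add_cancel hpa'] at e
  exact Nat.eq_of_mul_eq_mul_left hp e
end

section
/- Let D be a Young diagram with qx + py \leq Kpq - p - q for all (x,y) \in D (p, q coprime positive, K positive, P = Kp, Q = Kq). Then mid_{q/p}(D) = |D| - |{c \in D : p·l(c) \geq q·(a(c)+1)}| - |{c \in R_{P,Q} \ D : q·a(c) \geq p·(l(c)+1)}| + |R^+_{P,Q} \ D|, where mid_{q/p}(D) = |{c \in D : p·l(c) < q·(a(c)+1) and q·a(c) < p·(l(c)+1)}|, R^+_{P,Q} = {(x,y) \in (Z_{\geq 0})^2 : qx + py \leq Kpq - p - q}, and R_{P,Q} = {0,...,P-1} \times {0,...,Q-1}. -/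
/-! Write `c x` for the height of column `x` of `D` and `r y` for the length of row `y`, and give
the point `(x, y)` the level `q x + p y`. Let `A`, `C`, `E` be the sets counted on the right and
`B` the set of cells of `D` with `p (l + 1) ≤ q a`. The conditions defining mid, `A` and `B`
split `D`, so `mid = |D| - #A - #B` and the identity says `#C - #B - #E = 0`.

The boundary of `D` is a lattice path from `(0, Kq)` to `(Kp, 0)`, both of level `Kpq`, with one
east step per column and one south step per row. A cell of `D` pairs the east step of its column
with the later south step of its row, a cell outside `D` the other way round, and the conditions
of `B` and `C` say that the earlier step lies entirely below the later one in level. Now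
`#C - #B - #E` vanishes for the empty diagram by the reflection `x ↦ Kp - 1 - x`, and removing a
corner cell does not change it: the change is confined to the row and the column of the corner,
and telescoping the indicator of a level threshold along the boundary before and after the
corner shows that it is zero. -/

open Finset Function

/-- Mathlib's `YoungDiagram` reads a cell `(i, j)` as row `i`, column `j`, so its `rowLen x` is the
height of our column `x`. -/
theorem IsYoung.exists_colLen_rowLen {D : Finset (ℕ × ℕ)} (hD : IsYoung D) :
    ∃ c r : ℕ → ℕ, (∀ x y, (x, y) ∈ D ↔ y < c x) ∧
      ∀ x y, (x, y) ∈ D ↔ x < r y :=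
  let μ : YoungDiagram := ⟨D, fun z w hwz hz => hD z.1 z.2 w.1 w.2 hz hwz.1 hwz.2⟩
  ⟨μ.rowLen, μ.colLen, fun _ _ => YoungDiagram.mem_iff_lt_rowLen (μ := μ),
    fun _ _ => YoungDiagram.mem_iff_lt_colLen (μ := μ)⟩

namespace MidStatistic

/-- The level of the top `(x, c x)` of column `x`. With `p, q` and column heights and row
lengths exchanged, `colLevel q p r y` is the level of the right end `(r y, y)` of row `y`. -/
def colLevel (p q : ℕ) (c : ℕ → ℕ) (x : ℕ) : ℕ := q * x + p * c x

/-- The increase of `φ ∘ level` along the east steps in the columns `X` and the south steps in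
the rows `Y` of the boundary path. -/
def boundarySum (p q : ℕ) (c r : ℕ → ℕ) (φ : ℕ → ℤ) (X Y : Finset ℕ) : ℤ :=
  ∑ x ∈ X, (φ (colLevel p q c x + q) - φ (colLevel p q c x)) +
    ∑ y ∈ Y, (φ (colLevel q p r y) - φ (colLevel q p r y + p))

theorem sum_Ico_sub_succ (f : ℕ → ℤ) {m n : ℕ} (h : m ≤ n) :
    ∑ i ∈ Ico m n, (f i - f (i + 1)) = f m - f n := by
  rw [← neg_sub, ← sum_Ico_sub (f := f) h, ← sum_neg_distrib]
  simp only [neg_sub]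

theorem sum_range_eq_add_add {M : Type*} [AddCommMonoid M] (f : ℕ → M) {a n : ℕ}
    (h : a < n) :
    ∑ x ∈ range n, f x = ∑ x ∈ range a, f x + f a + ∑ x ∈ Ico (a + 1) n, f x := by
  rw [← sum_range_add_sum_Ico f h.le, sum_eq_sum_Ico_succ_bot h, add_assoc]

theorem sum_sum_eq_of_eq_zero_off_cross {M : Type*} [AddCommMonoid M] (g : ℕ → ℕ → M)
    {a b P Q : ℕ} (ha : a < P) (hb : b < Q) (hg : ∀ x y, x ≠ a → y ≠ b → g x y = 0) :
    ∑ x ∈ range P, ∑ y ∈ range Q, g x y =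
      (∑ x ∈ range a, g x b + ∑ y ∈ Ico (b + 1) Q, g a y) +
        (∑ x ∈ Ico (a + 1) P, g x b + ∑ y ∈ range b, g a y) + g a b := by
  have hrow : ∀ x ≠ a, ∑ y ∈ range Q, g x y = g x b := fun x hx =>
    sum_eq_single_of_mem b (mem_range.2 hb) fun y _ hy => hg x y hx hy
  rw [sum_range_eq_add_add _ ha, sum_range_eq_add_add (g a) hb,
    sum_congr rfl fun x hx => hrow x (by rw [mem_range] at hx; omega),
    sum_congr rfl fun x hx => hrow x (by rw [mem_Ico] at hx; omega)]
  abel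

section Boundary

variable {p q : ℕ} {c r : ℕ → ℕ}

theorem antitone_of_lt_iff (hcr : ∀ x y, y < c x ↔ x < r y) : Antitone c :=
  fun x x' hx => le_of_not_gt fun h =>
    lt_irrefl (c x) ((hcr x (c x)).2 (lt_of_le_of_lt hx ((hcr x' (c x)).1 h)))

/-- The boundary from `(0, Q)` to the top of column `a`. -/
theorem boundarySum_range_Ico (hcr : ∀ x y, y < c x ↔ x < r y) {Q : ℕ} (hQ : c 0 ≤ Q)
    (φ : ℕ → ℤ) (a : ℕ) :
    boundarySum p q c r φ (range a) (Ico (c a) Q) = φ (colLevel p q c a) - φ (p * Q) := by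
  have hrows : ∀ x, ∀ y ∈ Ico (c (x + 1)) (c x), colLevel q p r y = p * y + q * (x + 1) := by
    intro x y hy
    have := hcr x y
    have := hcr (x + 1) y
    rw [mem_Ico] at hy
    rw [colLevel, show r y = x + 1 by omega]
  rw [boundarySum]
  induction a with
  | zero =>
    have hrow : ∀ y ∈ Ico (c 0) Q, colLevel q p r y = p * y := by
      intro y hy
      have := hcr 0 y
      rw [mem_Ico] at hy
      rw [colLevel, show r y = 0 by omega, mul_zero, add_zero]
    rw [sum_range_zero, zero_add, sum_congr rfl fun y hy => by rw [hrow y hy, ← mul_add_one],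
      sum_Ico_sub_succ (fun y => φ (p * y)) hQ, colLevel, mul_zero, zero_add]
  | succ a ih =>
    have hanti := antitone_of_lt_iff hcr
    have hnew : ∑ y ∈ Ico (c (a + 1)) (c a),
        (φ (colLevel q p r y) - φ (colLevel q p r y + p)) =
          φ (colLevel p q c (a + 1)) - φ (colLevel p q c a + q) := by
      rw [sum_congr rfl fun y hy => by rw [hrows a y hy, add_right_comm, ← mul_add_one p y],
        sum_Ico_sub_succ (fun y => φ (p * y + q * (a + 1))) (hanti (Nat.le_add_right a 1))]
      simp only [colLevel]
      congr 2 <;> ring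
    rw [sum_range_succ, ← sum_Ico_consecutive _ (hanti (Nat.le_add_right a 1))
      ((hanti a.zero_le).trans hQ), hnew]
    linear_combination ih

/-- The boundary from the right end of row `b` to `(P, 0)`. -/
theorem boundarySum_Ico_range (hcr : ∀ x y, y < c x ↔ x < r y) {P : ℕ} (hP : r 0 ≤ P)
    (φ : ℕ → ℤ) (b : ℕ) :
    boundarySum p q c r φ (Ico (r b) P) (range b) = φ (q * P) - φ (colLevel q p r b) := by
  have h := boundarySum_range_Ico (p := q) (q := p) (fun y x => (hcr x y).symm) hP φ b
  rw [boundarySum, ← neg_sub (φ (colLevel q p r b)), ← h, boundarySum]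
  simp only [neg_add, ← sum_neg_distrib, neg_sub]
  abel

theorem exists_corner (hcr : ∀ x y, y < c x ↔ x < r y) (h : 0 < r 0) :
    ∃ a b, a < r 0 ∧ b < c 0 ∧ c a = b + 1 ∧ r b = a + 1 := by
  have h₀ := hcr (r 0 - 1) 0
  have h₁ := hcr (r 0) 0
  refine ⟨r 0 - 1, c (r 0 - 1) - 1, by omega, ?_, by omega, ?_⟩
  · have := antitone_of_lt_iff hcr (Nat.zero_le (r 0 - 1))
    omega
  · have := hcr (r 0 - 1) (c (r 0 - 1) - 1)
    have := hcr (r 0) (c (r 0 - 1) - 1)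
    omega

theorem lt_iff_update_corner (hcr : ∀ x y, y < c x ↔ x < r y) {a b : ℕ} (hca : c a = b + 1)
    (hrb : r b = a + 1) (x y : ℕ) : y < update c a b x ↔ x < update r b a y := by
  have h₁ := hcr x y
  have h₂ := hcr a y
  have h₃ := hcr x b
  rcases eq_or_ne x a with rfl | hx <;> rcases eq_or_ne y b with rfl | hy <;>
    simp_all [update_of_ne] <;> omega

end Boundary

/-- Cells of the diagram (`y < c x`) weigh minus the indicator of the arm–leg condition of `B`,
cells outside it the indicator of that of `C` minus the indicator of `E`. -/
def cellWeight (p q K : ℕ) (c r : ℕ → ℕ) (x y : ℕ) : ℤ :=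
  if y < c x then -(if colLevel p q c x + q ≤ colLevel q p r y then 1 else 0)
  else (if colLevel q p r y + p ≤ colLevel p q c x then 1 else 0) -
    (if q * x + p * y + p + q ≤ K * p * q then 1 else 0)

section Weight

variable {p q K : ℕ} {c r : ℕ → ℕ}

theorem sum_cellWeight_sub_update_corner (hp : 0 < p) (hcr : ∀ x y, y < c x ↔ x < r y)
    {a b : ℕ} (hca : c a = b + 1) (hrb : r b = a + 1) (ha : a < K * p) (hb : b < K * q)
    (hab : q * a + p * b + p + q ≤ K * p * q) :
    ∑ x ∈ range (K * p), ∑ y ∈ range (K * q),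
        (cellWeight p q K c r x y - cellWeight p q K (update c a b) (update r b a) x y) =
      boundarySum p q c r (fun l => if l ≤ q * a + p * b then 1 else 0)
          (range a) (Ico (b + 1) (K * q)) +
        boundarySum p q c r (fun l => if l < q * a + p * b + p + q then 1 else 0)
          (Ico (a + 1) (K * p)) (range b) + 1 := by
  have hcorner : cellWeight p q K c r a b -
      cellWeight p q K (update c a b) (update r b a) a b = 1 := by
    simp only [cellWeight, colLevel, update_self, hca, hrb]
    split_ifs <;> simp only [mul_add, mul_one] at * <;> omega
  rw [sum_sum_eq_of_eq_zero_off_cross _ ha hb fun x y hx hy => sub_eq_zero.2 <| by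
    simp only [cellWeight, colLevel, update_of_ne hx, update_of_ne hy]; rfl]
  rw [boundarySum, boundarySum, hcorner]
  congr 3
  · refine sum_congr rfl fun x hx => ?_
    rw [mem_range] at hx
    have hxb : b < c x := (hcr x b).2 (by omega)
    simp only [cellWeight, colLevel, update_of_ne hx.ne, update_self, hrb, hxb, if_true]
    simp only [mul_add, mul_one]
    split_ifs <;> omega
  · refine sum_congr rfl fun y hy => ?_
    rw [mem_Ico] at hy
    simp only [cellWeight, colLevel, update_of_ne (show y ≠ b by omega), update_self, hca,
      show ¬ y < b + 1 by omega, show ¬ y < b by omega, if_false]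
    simp only [mul_add, mul_one]
    split_ifs <;> omega
  · refine sum_congr rfl fun x hx => ?_
    rw [mem_Ico] at hx
    have hxb : ¬ b < c x := fun h => by have := (hcr x b).1 h; omega
    simp only [cellWeight, colLevel, update_of_ne (show x ≠ a by omega), update_self, hrb, hxb,
      if_false]
    simp only [mul_add, mul_one]
    split_ifs <;> omega
  · refine sum_congr rfl fun y hy => ?_
    rw [mem_range] at hy
    simp only [cellWeight, colLevel, update_of_ne hy.ne, update_self, hca,
      show y < b + 1 by omega, hy, if_true]
    simp only [mul_add, mul_one]
    split_ifs <;> omega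

theorem sum_cellWeight_update_corner (hp : 0 < p) (hcr : ∀ x y, y < c x ↔ x < r y)
    (hcQ : c 0 ≤ K * q) (hrP : r 0 ≤ K * p) {a b : ℕ} (hca : c a = b + 1) (hrb : r b = a + 1)
    (ha : a < K * p) (hb : b < K * q) (hab : q * a + p * b + p + q ≤ K * p * q) :
    ∑ x ∈ range (K * p), ∑ y ∈ range (K * q),
        cellWeight p q K (update c a b) (update r b a) x y =
      ∑ x ∈ range (K * p), ∑ y ∈ range (K * q), cellWeight p q K c r x y := by
  have hbefore := boundarySum_range_Ico (p := p) (q := q) hcr hcQ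
    (fun l => if l ≤ q * a + p * b then 1 else 0) a
  have hafter := boundarySum_Ico_range (p := p) (q := q) hcr hrP
    (fun l => if l < q * a + p * b + p + q then 1 else 0) b
  rw [hca] at hbefore
  rw [hrb] at hafter
  rw [eq_comm, ← sub_eq_zero, ← sum_sub_distrib]
  simp_rw [← sum_sub_distrib]
  rw [sum_cellWeight_sub_update_corner hp hcr hca hrb ha hb hab, hbefore, hafter]
  simp only [colLevel, hca, hrb]
  rw [if_neg (by rw [mul_add_one]; omega), if_neg (by rw [← mul_assoc, mul_comm p K]; omega),
    if_neg (by rw [mul_comm]; omega), if_pos (by rw [mul_add_one]; omega)]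
  norm_num

theorem sum_cellWeight_zero (p q K : ℕ) :
    ∑ x ∈ range (K * p), ∑ y ∈ range (K * q),
      cellWeight p q K (fun _ => 0) (fun _ => 0) x y = 0 := by
  simp only [cellWeight, colLevel, not_lt_zero, if_false, mul_zero, add_zero, sum_sub_distrib]
  rw [sub_eq_zero, ← sum_range_reflect]
  refine sum_congr rfl fun x hx => sum_congr rfl fun y _ => if_congr ?_ rfl rfl
  rw [mem_range] at hx
  have h : q * (K * p - 1 - x) + q * x + q = K * p * q := by
    rw [← mul_add, ← mul_add_one, show K * p - 1 - x + x + 1 = K * p by omega, mul_comm]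
  omega

theorem lt_of_level_le (hp : 0 < p) {x y : ℕ} (h : q * x + p * y + p + q ≤ K * p * q) :
    x < K * p ∧ y < K * q := by
  constructor <;> by_contra! hc <;> nlinarith

theorem sum_cellWeight_eq_zero (hp : 0 < p) (hcr : ∀ x y, y < c x ↔ x < r y)
    (hbound : ∀ x y, y < c x → q * x + p * y + p + q ≤ K * p * q) :
    ∑ x ∈ range (K * p), ∑ y ∈ range (K * q), cellWeight p q K c r x y = 0 := by
  obtain ⟨n, hn⟩ : ∃ n, ∑ x ∈ range (K * p), c x = n := ⟨_, rfl⟩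
  induction n generalizing c r with
  | zero =>
    have hbox := fun x y h => lt_of_level_le hp (hbound x y h)
    obtain rfl : c = fun _ => 0 := funext fun x => by
      by_contra! h
      by_cases hx : x < K * p
      · exact h (sum_eq_zero_iff.1 hn x (mem_range.2 hx))
      · exact hx (hbox x 0 (Nat.pos_of_ne_zero h)).1
    obtain rfl : r = fun _ => 0 := funext fun y => by
      have := hcr 0 y
      simp only [not_lt_zero, false_iff, not_lt] at this
      omega
    exact sum_cellWeight_zero p q K
  | succ n ih =>
    have hbox := fun x y h => lt_of_level_le hp (hbound x y h)
    have hcQ : c 0 ≤ K * q := by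
      by_contra! h
      exact (hbox 0 (K * q) h).2.false
    have hrP : r 0 ≤ K * p := by
      by_contra! h
      exact (hbox (K * p) 0 ((hcr _ _).2 h)).1.false
    obtain ⟨x₀, -, hx₀⟩ := exists_ne_zero_of_sum_ne_zero (hn.trans_ne n.succ_ne_zero)
    obtain ⟨a, b, ha, hb, hca, hrb⟩ :=
      exists_corner hcr ((Nat.zero_le x₀).trans_lt ((hcr x₀ 0).1 (Nat.pos_of_ne_zero hx₀)))
    have ha : a < K * p := by omega
    rw [← sum_cellWeight_update_corner hp hcr hcQ hrP hca hrb ha (by omega)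
      (hbound a b (by omega))]
    refine ih (lt_iff_update_corner hcr hca hrb) (fun x y h => hbound x y (h.trans_le ?_)) ?_
    · rw [update_apply]
      split_ifs with hx
      · rw [hx]
        omega
      · exact le_rfl
    · rw [sum_update_of_mem (mem_range.2 ha), sdiff_singleton_eq_erase,
        ← add_sum_erase _ _ (mem_range.2 ha)] at *
      omega

end Weight

section Diagram

variable {D : Finset (ℕ × ℕ)} {c r : ℕ → ℕ}

theorem arm_eq (hr : ∀ x y, (x, y) ∈ D ↔ x < r y) (x y : ℕ) :
    arm D (x, y) = r y - x - 1 := by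
  have h : D.filter (fun d => d.2 = y ∧ x < d.1) = Ioo x (r y) ×ˢ {y} := by
    ext ⟨x', y'⟩
    simp only [mem_filter, mem_product, mem_Ioo, mem_singleton, hr]
    grind
  rw [arm, h, card_product, card_singleton, mul_one, Nat.card_Ioo]

theorem leg_eq (hc : ∀ x y, (x, y) ∈ D ↔ y < c x) (x y : ℕ) :
    leg D (x, y) = c x - y - 1 := by
  have h : D.filter (fun d => d.1 = x ∧ y < d.2) = {x} ×ˢ Ioo y (c x) := by
    ext ⟨x', y'⟩
    simp only [mem_filter, mem_product, mem_Ioo, mem_singleton, hc]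
    grind
  rw [leg, h, card_product, card_singleton, one_mul, Nat.card_Ioo]

theorem coArm_eq (hr : ∀ x y, (x, y) ∈ D ↔ x < r y) (x y : ℕ) :
    coArm D (x, y) = x - r y := by
  have h : (range x).filter (fun x' => (x', y) ∉ D) = Ico (r y) x := by
    ext x'
    simp only [mem_filter, mem_range, mem_Ico, hr]
    omega
  rw [coArm, h, Nat.card_Ico]

theorem coLeg_eq (hc : ∀ x y, (x, y) ∈ D ↔ y < c x) (x y : ℕ) :
    coLeg D (x, y) = y - c x := by
  have h : (range y).filter (fun y' => (x, y') ∉ D) = Ico (c x) y := by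
    ext y'
    simp only [mem_filter, mem_range, mem_Ico, hc]
    omega
  rw [coLeg, h, Nat.card_Ico]

theorem cellWeight_eq (hc : ∀ x y, (x, y) ∈ D ↔ y < c x)
    (hr : ∀ x y, (x, y) ∈ D ↔ x < r y) (p q K x y : ℕ) :
    cellWeight p q K c r x y =
      (if (x, y) ∉ D ∧ p * (coLeg D (x, y) + 1) ≤ q * coArm D (x, y) then 1 else 0) -
        (if (x, y) ∈ D ∧ p * (leg D (x, y) + 1) ≤ q * arm D (x, y) then 1 else 0) -
        (if q * x + p * y + p + q ≤ K * p * q ∧ (x, y) ∉ D then 1 else 0) := by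
  have hxy := (hc x y).symm.trans (hr x y)
  rw [coLeg_eq hc, coArm_eq hr, leg_eq hc, arm_eq hr]
  simp only [hc x y, cellWeight, colLevel]
  by_cases h : y < c x
  · obtain ⟨l, hl⟩ := Nat.exists_eq_add_of_lt h
    obtain ⟨m, hm⟩ := Nat.exists_eq_add_of_lt (hxy.1 h)
    simp only [hl, hm, show y + l + 1 - y - 1 = l by omega, show x + m + 1 - x - 1 = m by omega,
      mul_add, mul_one]
    split_ifs <;> omega
  · obtain ⟨l, hl⟩ := Nat.exists_eq_add_of_le (not_lt.1 h)
    obtain ⟨m, hm⟩ := Nat.exists_eq_add_of_le (not_lt.1 (mt hxy.2 h))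
    have hpy : p * y = p * c x + p * l := by rw [hl, mul_add]
    have hqx : q * x = q * r y + q * m := by rw [hm, mul_add]
    simp only [show y - c x = l by omega, show x - r y = m by omega, mul_add, mul_one]
    split_ifs <;> omega

theorem sum_cellWeight_eq_card (hc : ∀ x y, (x, y) ∈ D ↔ y < c x)
    (hr : ∀ x y, (x, y) ∈ D ↔ x < r y) {p q K : ℕ}
    (hsub : D ⊆ range (K * p) ×ˢ range (K * q)) :
    ∑ x ∈ range (K * p), ∑ y ∈ range (K * q), cellWeight p q K c r x y =
      (((range (K * p) ×ˢ range (K * q)).filter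
          fun z => z ∉ D ∧ p * (coLeg D z + 1) ≤ q * coArm D z).card : ℤ) -
        ((D.filter fun z => p * (leg D z + 1) ≤ q * arm D z).card : ℤ) -
        (((range (K * p) ×ˢ range (K * q)).filter
          fun z => q * z.1 + p * z.2 + p + q ≤ K * p * q ∧ z ∉ D).card : ℤ) := by
  have hB : (D.filter fun z => p * (leg D z + 1) ≤ q * arm D z) =
      (range (K * p) ×ˢ range (K * q)).filter
        fun z => z ∈ D ∧ p * (leg D z + 1) ≤ q * arm D z := by
    ext z
    simp only [mem_filter]
    exact ⟨fun h => ⟨hsub h.1, h⟩, And.right⟩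
  rw [hB, ← sum_boole, ← sum_boole, ← sum_boole, ← sum_sub_distrib, ← sum_sub_distrib,
    ← sum_product' (f := cellWeight p q K c r)]
  exact sum_congr rfl fun z _ => cellWeight_eq hc hr p q K z.1 z.2

end Diagram

theorem card_filter_trichotomy {α : Type*} (s : Finset α) (f g : α → ℕ) {p q : ℕ}
    (hp : 0 < p) :
    (s.filter fun z => p * g z < q * (f z + 1) ∧ q * f z < p * (g z + 1)).card +
        (s.filter fun z => q * (f z + 1) ≤ p * g z).card +
        (s.filter fun z => p * (g z + 1) ≤ q * f z).card = s.card := by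
  rw [card_filter, card_filter, card_filter, card_eq_sum_ones, ← sum_add_distrib,
    ← sum_add_distrib]
  refine sum_congr rfl fun z _ => ?_
  simp only [mul_add, mul_one]
  split_ifs <;> omega

end MidStatistic

open MidStatistic in
theorem mid_identity_general (D : Finset (ℕ × ℕ)) (hD : IsYoung D)
    (p q K : ℕ) (hp : 0 < p)
    (hdiag : ∀ c ∈ D, q * c.1 + p * c.2 + p + q ≤ K * p * q) :
    ((D.filter fun c =>
        p * leg D c < q * (arm D c + 1) ∧ q * arm D c < p * (leg D c + 1)).card : ℤ)
      = (D.card : ℤ)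
        - ((D.filter fun c => q * (arm D c + 1) ≤ p * leg D c).card : ℤ)
        - ((((Finset.range (K * p)) ×ˢ (Finset.range (K * q))).filter
              fun c => c ∉ D ∧ p * (coLeg D c + 1) ≤ q * coArm D c).card : ℤ)
        + ((((Finset.range (K * p)) ×ˢ (Finset.range (K * q))).filter
              fun c => q * c.1 + p * c.2 + p + q ≤ K * p * q ∧ c ∉ D).card : ℤ) := by
  obtain ⟨c, r, hc, hr⟩ := hD.exists_colLen_rowLen
  have hsub : D ⊆ range (K * p) ×ˢ range (K * q) := fun z hz =>
    mem_product.2 ((lt_of_level_le hp (hdiag z hz)).imp mem_range.2 mem_range.2)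
  have hzero := sum_cellWeight_eq_zero (K := K) hp (fun x y => (hc x y).symm.trans (hr x y))
    fun x y h => hdiag (x, y) ((hc x y).2 h)
  rw [sum_cellWeight_eq_card hc hr hsub] at hzero
  have hpart := card_filter_trichotomy D (arm D) (leg D) (q := q) hp
  omega

theorem mid_identity (D : Finset (ℕ × ℕ)) (hD : IsYoung D)
    (p q K : ℕ) (hp : 0 < p) (hq : 0 < q) (hK : 0 < K) (hpq : Nat.Coprime p q)
    (hdiag : ∀ c ∈ D, q * c.1 + p * c.2 + p + q ≤ K * p * q) :
    ((D.filter fun c =>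
        p * leg D c < q * (arm D c + 1) ∧ q * arm D c < p * (leg D c + 1)).card : ℤ)
      = (D.card : ℤ)
        - ((D.filter fun c => q * (arm D c + 1) ≤ p * leg D c).card : ℤ)
        - ((((Finset.range (K * p)) ×ˢ (Finset.range (K * q))).filter
              fun c => c ∉ D ∧ p * (coLeg D c + 1) ≤ q * coArm D c).card : ℤ)
        + ((((Finset.range (K * p)) ×ˢ (Finset.range (K * q))).filter
              fun c => q * c.1 + p * c.2 + p + q ≤ K * p * q ∧ c ∉ D).card : ℤ) :=
  mid_identity_general D hD p q K hp hdiag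
end
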